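/- arXiv:1608.05867 — 8 statements merged into one kernel-verified Lean document; each statement's English description precedes it below -/
import Mathlib

section
/- Let n be a natural number and let ε be a function assigning an element of ZMod 2 to each edge of the graph 𝒢ₙ. If for every triangle of 𝒢ₙ (three pairwise adjacent vertices Q₁, Q₂, Q₃) one has ε({Q₁,Q₂}) + ε({Q₂,Q₃}) + ε({Q₁,Q₃}) = 0, then for every cycle of 𝒢ₙ the sum of ε over the edges of the cycle is 0. (Equivalently, the cycle space of 𝒢ₙ over ZMod 2 is generated by its triangles.) -/
/-- The graph `𝒢ₙ` whose vertices are the 5-element subsets of `Fin n`,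
with `Q, Q'` adjacent iff `|Q ∩ Q'| = 4`. -/
def ATGraph (n : ℕ) : SimpleGraph {Q : Finset (Fin n) // Q.card = 5} where
  Adj Q Q' := (Q.1 ∩ Q'.1).card = 4
  symm := by
    constructor
    intro Q Q' h
    rwa [Finset.inter_comm]
  loopless := by
    constructor
    intro Q h
    rw [Finset.inter_self, Q.2] at h
    exact absurd h (by norm_num)

/-!
Fix the base vertex `P` of a closed walk and measure a vertex `Q` by its distance `|Q \ P|`
from `P`. A nontrivial closed walk at `P` has a vertex `S` whose predecessor `Y` is no farther
from `P` and whose successor `Z` is strictly nearer. Modulo triangles, the segment `Y S Z` can be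
replaced by `Y` (if `Y = Z`), by `Y Z` (if `Y ~ Z`), and otherwise by `Y M Z` for a common
neighbour `M` of `Y`, `S`, `Z` that is nearer to `P` than `S`. Each replacement decreases
`∑ 2 ^ |Q \ P|` over the walk, so the walk reduces to the one-vertex walk at `P`.
-/

open Finset

namespace List

variable {α M : Type*} [AddMonoid M] (ε : Sym2 α → M)

def edgeSum : List α → M
  | [] => 0
  | [_] => 0
  | x :: y :: l => ε s(x, y) + edgeSum (y :: l)

@[simp] lemma edgeSum_nil : ([] : List α).edgeSum ε = 0 := rfl

@[simp] lemma edgeSum_singleton (x : α) : [x].edgeSum ε = 0 := rfl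

@[simp] lemma edgeSum_cons_cons (x y : α) (l : List α) :
    (x :: y :: l).edgeSum ε = ε s(x, y) + (y :: l).edgeSum ε := rfl

lemma edgeSum_append_cons (l₁ : List α) (y : α) (l₂ : List α) :
    (l₁ ++ y :: l₂).edgeSum ε = (l₁ ++ [y]).edgeSum ε + (y :: l₂).edgeSum ε := by
  induction l₁ using twoStepInduction with
  | nil => simp
  | singleton x => simp
  | cons_cons x x' l _ ih =>
    simp only [cons_append, edgeSum_cons_cons] at ih ⊢
    rw [ih, add_assoc]

lemma exists_eq_append_of_le_of_lt {β : Type*} [LinearOrder β] (f : α → β) :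
    ∀ (l : List α) {y s : α}, f y ≤ f s → (∃ z ∈ l, f z < f s) →
      ∃ l₁ y' s' z' l₂, y :: s :: l = l₁ ++ y' :: s' :: z' :: l₂ ∧ f y' ≤ f s' ∧ f z' < f s'
  | [], _, _, _, ⟨_, hz, _⟩ => absurd hz (not_mem_nil)
  | z :: l, y, s, hys, ⟨z', hz', hz's⟩ => by
    by_cases hzs : f z < f s
    · exact ⟨[], y, s, z, l, rfl, hys, hzs⟩
    · obtain ⟨l₁, y', s', z', l₂, heq, h⟩ := exists_eq_append_of_le_of_lt f l (not_lt.1 hzs)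
        ⟨z', (mem_cons.1 hz').resolve_left (by rintro rfl; exact hzs hz's), by order⟩
      exact ⟨y :: l₁, y', s', z', l₂, by rw [heq]; rfl, h⟩

end List

namespace SimpleGraph.Walk

variable {V M : Type*} [AddMonoid M] {G : SimpleGraph V}

lemma sum_map_edges_eq_edgeSum (ε : Sym2 V → M) {u v : V} (w : G.Walk u v) :
    (w.edges.map ε).sum = w.support.edgeSum ε := by
  induction w with
  | nil => simp
  | cons h p ih =>
    rw [edges_cons, support_cons, List.map_cons, List.sum_cons, ih, ← p.cons_tail_support]
    rfl

lemma head?_support {u v : V} (w : G.Walk u v) : w.support.head? = some u := by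
  cases w <;> rfl

lemma getLast?_support {u v : V} (w : G.Walk u v) : w.support.getLast? = some v := by
  rw [List.getLast?_eq_some_getLast w.support_ne_nil, getLast_support]

end SimpleGraph.Walk

namespace SimpleGraph

variable {V : Type*} (G : SimpleGraph V) (ε : Sym2 V → ZMod 2) (f : V → ℕ)

def SumZeroOnTriangles : Prop :=
  ∀ x y z, G.Adj x y → G.Adj y z → G.Adj x z → ε s(x, y) + ε s(y, z) + ε s(x, z) = 0

def PeaksReroutable : Prop :=
  ∀ y s z, G.Adj y s → G.Adj s z → y ≠ z → ¬G.Adj y z → f y ≤ f s → f z < f s →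
    ∃ m, G.Adj y m ∧ G.Adj s m ∧ G.Adj m z ∧ f m < f s

variable {G}

lemma exists_reroute_of_peak (htri : G.SumZeroOnTriangles ε) (hreroute : G.PeaksReroutable f)
    {y s z : V} {l : List V} (hl : (y :: s :: z :: l).IsChain G.Adj)
    (hys : f y ≤ f s) (hzs : f z < f s) :
    ∃ r : List V, (y :: r).IsChain G.Adj ∧ (y :: r).getLast? = (z :: l).getLast? ∧
      (y :: r).edgeSum ε = (y :: s :: z :: l).edgeSum ε ∧
      ((y :: r).map (2 ^ f ·)).sum < ((y :: s :: z :: l).map (2 ^ f ·)).sum := by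
  simp only [List.isChain_cons_cons] at hl
  obtain ⟨hy, hs, hz⟩ := hl
  have hpos : ∀ v, 0 < 2 ^ f v := fun v => by positivity
  by_cases hyz : y = z
  · subst hyz
    refine ⟨l, hz, rfl, ?_, ?_⟩
    · simp [Sym2.eq_swap (a := s), ← add_assoc, CharTwo.add_self_eq_zero]
    · simp only [List.map_cons, List.sum_cons]
      have := hpos s; have := hpos y; omega
  by_cases hyz' : G.Adj y z
  · refine ⟨z :: l, List.isChain_cons_cons.2 ⟨hyz', hz⟩, rfl, ?_, ?_⟩
    · have := htri y s z hy hs hyz'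
      simp only [List.edgeSum_cons_cons]
      grind
    · simp only [List.map_cons, List.sum_cons]
      have := hpos s; omega
  obtain ⟨m, hym, hsm, hmz, hms⟩ := hreroute y s z hy hs hyz hyz' hys hzs
  refine ⟨m :: z :: l, by simp [hym, hmz, hz], rfl, ?_, ?_⟩
  · have h₁ := htri y s m hy hsm hym
    have h₂ := htri s z m hs hmz.symm hsm
    simp only [List.edgeSum_cons_cons]
    rw [Sym2.eq_swap (a := m)]
    grind
  · simp only [List.map_cons, List.sum_cons]
    have := Nat.pow_lt_pow_right (le_refl 2) hms
    omega

theorem edgeSum_eq_zero_of_peaksReroutable (htri : G.SumZeroOnTriangles ε)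
    (hreroute : G.PeaksReroutable f) {P : V} (hP : ∀ v, v ≠ P → f P < f v)
    (l : List V) (hl : l.IsChain G.Adj) (hhead : l.head? = some P) (hlast : l.getLast? = some P) :
    l.edgeSum ε = 0 := by
  induction hN : (l.map (2 ^ f ·)).sum using Nat.strong_induction_on generalizing l with
  | _ N ih =>
  obtain _ | ⟨x, _ | ⟨y, t⟩⟩ := l
  · simp at hhead
  · rfl
  obtain rfl : P = x := by simpa using hhead.symm
  have hyP : y ≠ P := (G.ne_of_adj (List.isChain_cons_cons.1 hl).1).symm
  have hPt : P ∈ t := by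
    obtain _ | ⟨z, t⟩ := t
    · simp_all
    · rw [List.getLast?_cons_cons, List.getLast?_cons_cons] at hlast
      exact List.mem_of_getLast? hlast
  obtain ⟨l₁, Y, S, Z, l₂, hsplit, hYS, hZS⟩ :=
    List.exists_eq_append_of_le_of_lt f t (hP y hyP).le ⟨P, hPt, hP y hyP⟩
  rw [hsplit] at hl hhead hlast hN ⊢
  obtain ⟨hl₁, hl₂⟩ := List.isChain_split.1 hl
  obtain ⟨r, hr, hrlast, hrsum, hrweight⟩ := exists_reroute_of_peak ε f htri hreroute hl₂ hYS hZS
  have hlt : ((l₁ ++ Y :: r).map (2 ^ f ·)).sum < N := by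
    simp only [← hN, List.map_append, List.sum_append]
    omega
  have hhead' : (l₁ ++ Y :: r).head? = some P := by
    cases l₁ <;> simpa using hhead
  have hlast' : (l₁ ++ Y :: r).getLast? = some P := by
    rwa [List.getLast?_append_cons, hrlast, ← List.getLast?_cons_cons, ← List.getLast?_cons_cons,
      ← List.getLast?_append_cons]
  have := ih _ hlt (l₁ ++ Y :: r) (List.isChain_split.2 ⟨hl₁, hr⟩) hhead' hlast' rfl
  rwa [List.edgeSum_append_cons, hrsum, ← List.edgeSum_append_cons] at this

end SimpleGraph

namespace Finset

variable {α : Type*} [DecidableEq α] {P S T : Finset α} {a b c d : α}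

lemma exists_eq_insert_erase_of_card_inter (hT : #T = #S) (h : #(S ∩ T) + 1 = #S) :
    ∃ a ∈ S, ∃ b ∉ S, T = insert b (S.erase a) := by
  obtain ⟨a, ha⟩ := card_eq_one.1 (by rw [card_sdiff, inter_comm]; omega : #(S \ T) = 1)
  obtain ⟨b, hb⟩ := card_eq_one.1 (by rw [card_sdiff]; omega : #(T \ S) = 1)
  have haS := mem_sdiff.1 (ha ▸ mem_singleton_self a : a ∈ S \ T)
  have hbT := mem_sdiff.1 (hb ▸ mem_singleton_self b : b ∈ T \ S)
  refine ⟨a, haS.1, b, hbT.2, ?_⟩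
  rw [insert_eq, ← hb, erase_eq, ← ha, sdiff_sdiff_self_left, inter_comm, sdiff_union_inter]

lemma card_inter_insert_erase_add (P : Finset α) (ha : a ∈ S) (hb : b ∉ S) :
    #(P ∩ insert b (S.erase a)) + (if a ∈ P then 1 else 0) =
      #(P ∩ S) + (if b ∈ P then 1 else 0) := by
  have h₁ : #(P ∩ insert b (S.erase a)) = #(P ∩ S.erase a) + if b ∈ P then 1 else 0 := by
    split_ifs with hbP
    · rw [inter_insert_of_mem hbP, card_insert_of_notMem (by simp [hb])]
    · rw [inter_insert_of_notMem hbP, add_zero]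
  have h₂ : #(P ∩ S.erase a) + (if a ∈ P then 1 else 0) = #(P ∩ S) := by
    rw [inter_erase]
    split_ifs with haP
    · exact card_erase_add_one (mem_inter.2 ⟨haP, ha⟩)
    · rw [erase_eq_of_notMem (by simp [haP]), add_zero]
  omega

lemma card_inter_insert_erase_of_ne (ha : a ∈ S) (hb : b ∉ S) (hc : c ∈ S) (hd : d ∉ S)
    (hac : a ≠ c) (hbd : b ≠ d) :
    #(insert b (S.erase c)) = #S ∧ #(insert b (S.erase c) ∩ S) + 1 = #S ∧
      #(insert b (S.erase c) ∩ insert b (S.erase a)) + 1 = #S ∧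
      #(insert b (S.erase c) ∩ insert d (S.erase c)) + 1 = #S := by
  have hM : #(insert b (S.erase c)) = #S := by
    rw [card_insert_of_notMem (by simp [hb]), card_erase_add_one hc]
  have hMS := card_inter_insert_erase_add S hc hb
  have hMY := card_inter_insert_erase_add (insert b (S.erase c)) ha hb
  have hMZ := card_inter_insert_erase_add (insert b (S.erase c)) hc hd
  have haM : a ∈ insert b (S.erase c) := mem_insert_of_mem (mem_erase.2 ⟨hac, ha⟩)
  have hcM : c ∉ insert b (S.erase c) := by simp [ne_of_mem_of_not_mem hc hb]
  have hdM : d ∉ insert b (S.erase c) := by simp [hbd.symm, hd]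
  rw [inter_self, inter_comm, if_pos hc, if_neg hb] at hMS
  rw [if_pos haM, if_pos (mem_insert_self b _)] at hMY
  rw [if_neg hcM, if_neg hdM] at hMZ
  omega

lemma card_sdiff_pos_of_card_le (h : #T ≤ #S) (hne : S ≠ T) : 0 < #(S \ T) :=
  card_pos.2 <| nonempty_iff_ne_empty.2 fun h' =>
    hne (eq_of_subset_of_card_le (sdiff_eq_empty_iff_subset.1 h') h)

theorem exists_reroute_of_card_inter {Y Z : Finset α} (hY : #Y = #S) (hZ : #Z = #S)
    (hSY : #(S ∩ Y) + 1 = #S) (hSZ : #(S ∩ Z) + 1 = #S) (hYZ : Y ≠ Z) (hYZ' : #(Y ∩ Z) + 1 ≠ #S)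
    (hPY : #(P ∩ S) ≤ #(P ∩ Y)) (hPZ : #(P ∩ S) < #(P ∩ Z)) :
    ∃ M, #M = #S ∧ #(M ∩ S) + 1 = #S ∧ #(M ∩ Y) + 1 = #S ∧ #(M ∩ Z) + 1 = #S ∧
      #(P ∩ S) < #(P ∩ M) := by
  obtain ⟨a, ha, b, hb, rfl⟩ := exists_eq_insert_erase_of_card_inter hY hSY
  obtain ⟨c, hc, d, hd, rfl⟩ := exists_eq_insert_erase_of_card_inter hZ hSZ
  -- `Y = S - a + b` and `Z = S - c + d` are not adjacent, so `a ≠ c` and `b ≠ d`; then both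
  -- `S - c + b` and `S - a + d` are common neighbours of `S`, `Y`, `Z`, and one of them gains a
  -- point of `P` over `S`.
  have hYZcard := card_inter_insert_erase_add (insert b (S.erase a)) hc hd
  rw [inter_comm _ S] at hYZcard
  have hac : a ≠ c := by
    rintro rfl
    have hdY : d ∈ insert b (S.erase a) ↔ d = b := by simp [hd]
    by_cases hdb : d = b
    · exact hYZ (by rw [hdb])
    · rw [if_neg (by simp [ne_of_mem_of_not_mem ha hb]), if_neg (hdY.not.2 hdb)] at hYZcard
      omega
  have hbd : b ≠ d := by
    rintro rfl
    rw [if_pos (by simp [hac.symm, hc]), if_pos (mem_insert_self b _)] at hYZcard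
    omega
  have hPY' := card_inter_insert_erase_add P ha hb
  have hPZ' := card_inter_insert_erase_add P hc hd
  have hdP : d ∈ P := by by_contra h; split_ifs at hPZ' <;> omega
  have hcP : c ∉ P := by intro h; simp only [if_pos h, if_pos hdP] at hPZ'; omega
  by_cases hbP : b ∈ P
  · have hPM := card_inter_insert_erase_add P hc hb
    rw [if_neg hcP, if_pos hbP] at hPM
    obtain ⟨h₁, h₂, h₃, h₄⟩ := card_inter_insert_erase_of_ne ha hb hc hd hac hbd
    exact ⟨_, h₁, h₂, h₃, h₄, by omega⟩
  · have haP : a ∉ P := by intro h; rw [if_pos h, if_neg hbP] at hPY'; omega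
    have hPM := card_inter_insert_erase_add P ha hd
    rw [if_neg haP, if_pos hdP] at hPM
    obtain ⟨h₁, h₂, h₃, h₄⟩ := card_inter_insert_erase_of_ne hc hd ha hb hac.symm hbd.symm
    exact ⟨_, h₁, h₂, h₄, h₃, by omega⟩

end Finset

namespace ATGraph

variable {n : ℕ}

lemma peaksReroutable (P : {Q : Finset (Fin n) // Q.card = 5}) :
    (ATGraph n).PeaksReroutable fun Q => #(Q.1 \ P.1) := by
  intro Y S Z hYS hSZ hYZ hYZ' hY hZ
  change #(Y.1 ∩ S.1) = 4 at hYS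
  change #(S.1 ∩ Z.1) = 4 at hSZ
  change #(Y.1 ∩ Z.1) ≠ 4 at hYZ'
  dsimp only at hY hZ ⊢
  rw [card_sdiff, card_sdiff] at hY hZ
  obtain ⟨M, hM, hMS, hMY, hMZ, hPM⟩ := exists_reroute_of_card_inter (P := P.1)
    (Y.2.trans S.2.symm) (Z.2.trans S.2.symm) (by rw [inter_comm, hYS, S.2])
    (by rw [hSZ, S.2]) (Subtype.coe_injective.ne hYZ) (by rw [S.2]; omega) (by omega) (by omega)
  refine ⟨⟨M, hM.trans S.2⟩, ?_, ?_, ?_, ?_⟩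
  · change #(Y.1 ∩ M) = 4; rw [inter_comm]; omega
  · change #(S.1 ∩ M) = 4; rw [inter_comm]; omega
  · change #(M ∩ Z.1) = 4; omega
  · change #(M \ P.1) < _; rw [card_sdiff, card_sdiff, hM]; omega

end ATGraph

theorem stmt0_general (n : ℕ)
    (ε : Sym2 {Q : Finset (Fin n) // Q.card = 5} → ZMod 2)
    (htri : ∀ Q₁ Q₂ Q₃, (ATGraph n).Adj Q₁ Q₂ → (ATGraph n).Adj Q₂ Q₃ →
      (ATGraph n).Adj Q₁ Q₃ → ε s(Q₁, Q₂) + ε s(Q₂, Q₃) + ε s(Q₁, Q₃) = 0)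
    (v : {Q : Finset (Fin n) // Q.card = 5}) (w : (ATGraph n).Walk v v) :
    (w.edges.map ε).sum = 0 := by
  rw [w.sum_map_edges_eq_edgeSum]
  refine SimpleGraph.edgeSum_eq_zero_of_peaksReroutable ε (fun Q => #(Q.1 \ v.1)) htri
    (ATGraph.peaksReroutable v) (P := v) ?_ _ w.isChain_adj_support w.head?_support
    w.getLast?_support
  intro Q hQ
  rw [sdiff_self, bot_eq_empty, card_empty]
  exact card_sdiff_pos_of_card_le (v.2.trans Q.2.symm).le (Subtype.coe_injective.ne hQ)

/-- If `ε` sums to zero on every triangle of `𝒢ₙ`, then `ε` sums to zero on the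
edges of every cycle of `𝒢ₙ`. -/
theorem stmt0 (n : ℕ)
    (ε : Sym2 {Q : Finset (Fin n) // Q.card = 5} → ZMod 2)
    (htri : ∀ Q₁ Q₂ Q₃, (ATGraph n).Adj Q₁ Q₂ → (ATGraph n).Adj Q₂ Q₃ →
      (ATGraph n).Adj Q₁ Q₃ → ε s(Q₁, Q₂) + ε s(Q₂, Q₃) + ε s(Q₁, Q₃) = 0)
    (v : {Q : Finset (Fin n) // Q.card = 5}) (w : (ATGraph n).Walk v v)
    (hw : w.IsCycle) :
    (w.edges.map ε).sum = 0 :=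
  stmt0_general n ε htri v w
end

section
/- Let n be a natural number and let ε be a function assigning an element of ZMod 2 to each edge of the graph 𝒢ₙ. Assume that every triangle Q₁, Q₂, Q₃ of 𝒢ₙ with |Q₁ ∩ Q₂ ∩ Q₃| = 4 satisfies ε({Q₁,Q₂}) + ε({Q₂,Q₃}) + ε({Q₁,Q₃}) = 0. If there is no map Φ from the 5-element subsets of Fin n to ZMod 2 such that Φ(Q) + Φ(Q') = ε({Q,Q'}) for every edge {Q,Q'} of 𝒢ₙ, then there exists a 6-element subset S of Fin n such that there is no map Φ from the 5-element subsets of S to ZMod 2 with Φ(Q) + Φ(Q') = ε({Q,Q'}) for every edge {Q,Q'} of 𝒢ₙ with Q ⊆ S and Q' ⊆ S. -/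
/-!
A potential for a cocycle `ε` on the Johnson graph of `k`-subsets is built one ground element
at a time: when `a` is added, a `k`-set `t ∋ a` receives the value `Φ s + ε {s, t}` for any
neighbour `s` of `t` avoiding `a`. This is well defined because two such neighbours are adjacent
to each other and to `t`, and the triangle condition applies. Hence if `ε` has no potential, some
triangle `Q₁ Q₂ Q₃` has nonzero sum; by hypothesis `|Q₁ ∩ Q₂ ∩ Q₃| ≠ k - 1`, which forces
`Q₃ ⊆ Q₁ ∪ Q₂`, a `(k + 1)`-set on which `ε` still has no potential.
-/

open Finset

namespace SimpleGraph

section Potentials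

variable {V : Type*} (G : SimpleGraph V)

def IsCocycle (ε : Sym2 V → ZMod 2) : Prop :=
  ∀ u v w, G.Adj u v → G.Adj v w → G.Adj u w → ε s(u, v) + ε s(v, w) + ε s(u, w) = 0

def IsPotentialOn (ε : Sym2 V → ZMod 2) (S : Set V) (Φ : V → ZMod 2) : Prop :=
  ∀ u v, u ∈ S → v ∈ S → G.Adj u v → Φ u + Φ v = ε s(u, v)

variable {G}

theorem IsPotentialOn.triangle_sum_eq_zero {ε : Sym2 V → ZMod 2} {S : Set V} {Φ : V → ZMod 2}
    (hΦ : G.IsPotentialOn ε S Φ) {u v w : V} (hu : u ∈ S) (hv : v ∈ S) (hw : w ∈ S)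
    (huv : G.Adj u v) (hvw : G.Adj v w) (huw : G.Adj u w) :
    ε s(u, v) + ε s(v, w) + ε s(u, w) = 0 := by
  rw [← hΦ u v hu hv huv, ← hΦ v w hv hw hvw, ← hΦ u w hu hw huw]
  ring_nf
  reduce_mod_char

end Potentials

-- Not `#(s ∩ t) = k - 1`, which would make every vertex of `johnson α 0` a loop.
def johnson (α : Type*) [DecidableEq α] (k : ℕ) : SimpleGraph {s : Finset α // #s = k} where
  Adj s t := #(s.1 ∩ t.1) + 1 = k
  symm := ⟨fun s t h => by rwa [inter_comm]⟩
  loopless := ⟨fun s h => by rw [inter_self, s.2] at h; omega⟩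

namespace johnson

variable {α : Type*} [DecidableEq α] {k : ℕ} {s s' t t' t₁ t₂ t₃ : {s : Finset α // #s = k}}
  {a : α}

theorem card_union_of_adj (h : (johnson α k).Adj t t') : #(t.1 ∪ t'.1) = k + 1 := by
  have h' : #(t.1 ∩ t'.1) + 1 = k := h
  have := card_union_add_card_inter t.1 t'.1
  rw [t.2, t'.2] at this
  omega

theorem adj_of_le_card_inter (hne : s ≠ t) (h : k ≤ #(s.1 ∩ t.1) + 1) :
    (johnson α k).Adj s t := by
  have hlt : #(s.1 ∩ t.1) < k := by
    by_contra! hle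
    have hst : s.1 ⊆ t.1 :=
      inter_eq_left.1 (eq_of_subset_of_card_le inter_subset_left (s.2.trans_le hle))
    exact hne (Subtype.ext (eq_of_subset_of_card_le hst (by rw [s.2, t.2])))
  change _ = _
  omega

theorem inter_eq_erase_of_adj (h : (johnson α k).Adj s t) (has : a ∉ s.1) (hat : a ∈ t.1) :
    s.1 ∩ t.1 = t.1.erase a := by
  have h' : #(s.1 ∩ t.1) + 1 = k := h
  refine eq_of_subset_of_card_le (fun x hx => ?_) ?_
  · exact mem_erase.2 ⟨fun hxa => has (hxa ▸ (mem_inter.1 hx).1), (mem_inter.1 hx).2⟩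
  · rw [card_erase_of_mem hat, t.2]
    omega

theorem adj_of_adj_of_notMem (hs : (johnson α k).Adj s t) (hs' : (johnson α k).Adj s' t)
    (has : a ∉ s.1) (has' : a ∉ s'.1) (hat : a ∈ t.1) (hne : s ≠ s') :
    (johnson α k).Adj s s' := by
  have h₁ := inter_eq_erase_of_adj hs has hat
  have h₂ := inter_eq_erase_of_adj hs' has' hat
  have hsub : t.1.erase a ⊆ s.1 ∩ s'.1 := fun x hx =>
    mem_inter.2 ⟨(mem_inter.1 (h₁ ▸ hx)).1, (mem_inter.1 (h₂ ▸ hx)).1⟩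
  have := card_le_card hsub
  rw [card_erase_of_mem hat, t.2] at this
  have : 0 < k := t.2 ▸ card_pos.2 ⟨a, hat⟩
  exact adj_of_le_card_inter hne (by omega)

theorem exists_adj_adj_erase_union (h : (johnson α k).Adj t t') (ha : a ∈ t.1) (ha' : a ∈ t'.1) :
    ∃ s : {s : Finset α // #s = k}, s.1 = (t.1 ∪ t'.1).erase a ∧
      (johnson α k).Adj s t ∧ (johnson α k).Adj s t' := by
  have hk : 0 < k := t.2 ▸ card_pos.2 ⟨a, ha⟩
  refine ⟨⟨(t.1 ∪ t'.1).erase a, ?_⟩, rfl, ?_, ?_⟩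
  · rw [card_erase_of_mem (mem_union_left _ ha), card_union_of_adj h]
    rfl
  · change #(_ ∩ _) + 1 = k
    rw [erase_inter, union_inter_cancel_left, card_erase_of_mem ha, t.2]
    omega
  · change #(_ ∩ _) + 1 = k
    rw [erase_inter, union_inter_cancel_right, card_erase_of_mem ha', t'.2]
    omega

theorem subset_union_of_triangle (h₁₂ : (johnson α k).Adj t₁ t₂) (h₂₃ : (johnson α k).Adj t₂ t₃)
    (h₁₃ : (johnson α k).Adj t₁ t₃) (h : #(t₁.1 ∩ t₂.1 ∩ t₃.1) + 1 ≠ k) :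
    t₃.1 ⊆ t₁.1 ∪ t₂.1 := by
  have c₁₂ : #(t₁.1 ∩ t₂.1) + 1 = k := h₁₂
  have c₂₃ : #(t₂.1 ∩ t₃.1) + 1 = k := h₂₃
  have c₁₃ : #(t₁.1 ∩ t₃.1) + 1 = k := h₁₃
  have e₁ := card_union_add_card_inter (t₁.1 ∩ t₂.1) (t₁.1 ∩ t₃.1)
  have e₃ := card_union_add_card_inter (t₁.1 ∩ t₃.1) (t₂.1 ∩ t₃.1)
  rw [← inter_inter_distrib_left] at e₁
  rw [← inter_inter_distrib_right] at e₃
  have b₁ := card_le_card (union_subset (inter_subset_left (s₁ := t₁.1) (s₂ := t₂.1))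
    (inter_subset_left (s₂ := t₃.1)))
  have b₂ := card_le_card (inter_subset_left (s₁ := t₁.1 ∩ t₂.1) (s₂ := t₃.1))
  rw [t₁.2] at b₁
  rw [← inter_eq_right, union_inter_distrib_right]
  refine eq_of_subset_of_card_le (union_subset inter_subset_right inter_subset_right) ?_
  rw [t₃.2]
  omega

variable {ε : Sym2 {s : Finset α // #s = k} → ZMod 2} {Φ : {s : Finset α // #s = k} → ZMod 2}
  {A : Finset α}

theorem add_eq_add_of_isPotentialOn (hε : (johnson α k).IsCocycle ε)
    (hΦ : (johnson α k).IsPotentialOn ε {s | s.1 ⊆ A} Φ) (haA : a ∉ A) (hat : a ∈ t.1)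
    (hs : s.1 ⊆ A) (hs' : s'.1 ⊆ A) (hst : (johnson α k).Adj s t)
    (hs't : (johnson α k).Adj s' t) :
    Φ s + ε s(s, t) = Φ s' + ε s(s', t) := by
  obtain rfl | hne := eq_or_ne s s'
  · rfl
  have hss' := adj_of_adj_of_notMem hst hs't (fun h => haA (hs h)) (fun h => haA (hs' h)) hat hne
  have htri := hε s s' t hss' hs't hst
  rw [← hΦ s s' hs hs' hss'] at htri
  linear_combination (norm := (ring_nf; reduce_mod_char)) htri

theorem exists_isPotentialOn_insert (hε : (johnson α k).IsCocycle ε)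
    (hΦ : (johnson α k).IsPotentialOn ε {s | s.1 ⊆ A} Φ) (haA : a ∉ A) :
    ∃ Ψ, (johnson α k).IsPotentialOn ε {s | s.1 ⊆ insert a A} Ψ := by
  have hc : ∀ t, ∃ c, ∀ s, s.1 ⊆ A → (johnson α k).Adj s t → a ∈ t.1 → Φ s + ε s(s, t) = c := by
    intro t
    by_cases h : ∃ s, s.1 ⊆ A ∧ (johnson α k).Adj s t
    · obtain ⟨s₀, hs₀, hs₀t⟩ := h
      exact ⟨Φ s₀ + ε s(s₀, t), fun s hs hst hat =>
        add_eq_add_of_isPotentialOn hε hΦ haA hat hs hs₀ hst hs₀t⟩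
    · exact ⟨0, fun s hs hst _ => absurd ⟨s, hs, hst⟩ h⟩
  choose c hc using hc
  have hedge_of_mem : ∀ t t', t.1 ⊆ insert a A → t'.1 ⊆ insert a A →
      (johnson α k).Adj t t' → a ∈ t.1 → c t + (if a ∈ t'.1 then c t' else Φ t') = ε s(t, t') := by
    intro t t' ht ht' htt' hat
    split_ifs with hat'
    · obtain ⟨s, hs, hst, hst'⟩ := exists_adj_adj_erase_union htt' hat hat'
      have hsA : s.1 ⊆ A := hs ▸ subset_insert_iff.1 (union_subset ht ht')
      rw [← hc t s hsA hst hat, ← hc t' s hsA hst' hat']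
      linear_combination (norm := (ring_nf; reduce_mod_char)) hε s t t' hst htt' hst'
    · rw [← hc t t' ((subset_insert_iff_of_notMem hat').1 ht') htt'.symm hat, Sym2.eq_swap]
      ring_nf
      reduce_mod_char
  refine ⟨fun t => if a ∈ t.1 then c t else Φ t, fun t t' ht ht' htt' => ?_⟩
  dsimp only
  by_cases hat : a ∈ t.1
  · simpa only [if_pos hat] using hedge_of_mem t t' ht ht' htt' hat
  by_cases hat' : a ∈ t'.1
  · rw [if_neg hat, if_pos hat', add_comm, Sym2.eq_swap]
    simpa only [if_neg hat] using hedge_of_mem t' t ht' ht htt'.symm hat'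
  · rw [if_neg hat, if_neg hat']
    exact hΦ t t' ((subset_insert_iff_of_notMem hat).1 ht)
      ((subset_insert_iff_of_notMem hat').1 ht') htt'

theorem exists_isPotentialOn_of_isCocycle (hε : (johnson α k).IsCocycle ε) (A : Finset α) :
    ∃ Φ, (johnson α k).IsPotentialOn ε {s | s.1 ⊆ A} Φ := by
  induction A using Finset.induction_on with
  | empty =>
    exact ⟨0, fun s t hs ht hst =>
      absurd (Subtype.ext ((subset_empty.1 hs).trans (subset_empty.1 ht).symm)) hst.ne⟩
  | insert a A haA ih =>
    obtain ⟨Φ, hΦ⟩ := ih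
    exact exists_isPotentialOn_insert hε hΦ haA

end johnson

end SimpleGraph

theorem ATGraph_eq_johnson (n : ℕ) : ATGraph n = SimpleGraph.johnson (Fin n) 5 := by
  ext Q Q'
  change _ = 4 ↔ _ + 1 = 5
  omega

open SimpleGraph johnson

/-- Orientability lemma: if `ε` (sums to zero on every triangle of `𝒢ₙ` whose three
vertices have a common intersection of size 4, and) admits no global "potential" `Φ`
with `Φ Q + Φ Q' = ε {Q,Q'}` on all edges, then some 6-element subset `S` of `Fin n`
already admits no such potential on the 5-subsets of `S`. -/
theorem stmt2 (n : ℕ)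
    (ε : Sym2 {Q : Finset (Fin n) // Q.card = 5} → ZMod 2)
    (htri : ∀ Q₁ Q₂ Q₃, (ATGraph n).Adj Q₁ Q₂ → (ATGraph n).Adj Q₂ Q₃ →
      (ATGraph n).Adj Q₁ Q₃ → (Q₁.1 ∩ Q₂.1 ∩ Q₃.1).card = 4 →
      ε s(Q₁, Q₂) + ε s(Q₂, Q₃) + ε s(Q₁, Q₃) = 0)
    (hglob : ¬ ∃ Φ : {Q : Finset (Fin n) // Q.card = 5} → ZMod 2,
      ∀ Q Q', (ATGraph n).Adj Q Q' → Φ Q + Φ Q' = ε s(Q, Q')) :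
    ∃ S : Finset (Fin n), S.card = 6 ∧
      ¬ ∃ Φ : {Q : Finset (Fin n) // Q.card = 5} → ZMod 2,
        ∀ Q Q', Q.1 ⊆ S → Q'.1 ⊆ S → (ATGraph n).Adj Q Q' →
          Φ Q + Φ Q' = ε s(Q, Q') := by
  rw [ATGraph_eq_johnson] at htri hglob ⊢
  by_cases hε : (johnson (Fin n) 5).IsCocycle ε
  · obtain ⟨Φ, hΦ⟩ := exists_isPotentialOn_of_isCocycle hε univ
    exact absurd ⟨Φ, fun Q Q' => hΦ Q Q' (subset_univ _) (subset_univ _)⟩ hglob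
  unfold IsCocycle at hε
  push Not at hε
  obtain ⟨Q₁, Q₂, Q₃, h₁₂, h₂₃, h₁₃, hne⟩ := hε
  have hQ₃ : Q₃.1 ⊆ Q₁.1 ∪ Q₂.1 :=
    subset_union_of_triangle h₁₂ h₂₃ h₁₃ fun h => hne (htri Q₁ Q₂ Q₃ h₁₂ h₂₃ h₁₃ (by omega))
  refine ⟨Q₁.1 ∪ Q₂.1, card_union_of_adj h₁₂, fun ⟨Φ, hΦ⟩ => hne ?_⟩
  have hΦ : (johnson (Fin n) 5).IsPotentialOn ε {Q | Q.1 ⊆ Q₁.1 ∪ Q₂.1} Φ := hΦ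
  exact hΦ.triangle_sum_eq_zero subset_union_left subset_union_right hQ₃ h₁₂ h₂₃ h₁₃
end

section
/- Let k ≥ 4 and let V be a finite set with |V| = k + 1. Suppose that for every subset F ⊆ V with |F| = k a cyclic arrangement π_F of F is given, and that for every two distinct such subsets F, F' the cyclic arrangements π_F and π_{F'} are compatible. Then there exists a cyclic arrangement π of V whose first-return map on every k-element subset F of V equals π_F; in particular π is compatible with every π_F. -/
/-- A permutation `σ` of `α` is a cyclic arrangement of a finite set `S` if it fixes
every point outside `S` and acts on `S` as a single cycle. -/
def IsCyclicArrangement {α : Type*} (S : Finset α) (σ : Equiv.Perm α) : Prop :=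
  (∀ a ∉ S, σ a = a) ∧ ∀ a ∈ S, ∀ b ∈ S, ∃ m : ℕ, (σ ^ m) a = b

/-- `π` is the first-return map of `ρ` on `A`: it fixes points outside `A` and sends
each `a ∈ A` to `ρ^[m] a` for the least `m ≥ 1` with `ρ^[m] a ∈ A`. -/
def IsFirstReturnMap {α : Type*} (ρ : Equiv.Perm α) (A : Finset α)
    (π : Equiv.Perm α) : Prop :=
  (∀ a ∉ A, π a = a) ∧
    ∀ a ∈ A, ∃ m : ℕ, 0 < m ∧ (ρ ^ m) a ∈ A ∧
      (∀ j, 0 < j → j < m → (ρ ^ j) a ∉ A) ∧ π a = (ρ ^ m) a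

/-- Cyclic arrangements `σ` of `A` and `τ` of `B` are compatible if some cyclic
arrangement of `A ∪ B` has first-return map `σ` on `A` and `τ` on `B`. -/
def CyclicCompatible {α : Type*} [DecidableEq α] (A B : Finset α)
    (σ τ : Equiv.Perm α) : Prop :=
  ∃ ρ : Equiv.Perm α, IsCyclicArrangement (A ∪ B) ρ ∧
    IsFirstReturnMap ρ A σ ∧ IsFirstReturnMap ρ B τ

/-!
Erasing a point `z` from a cyclic arrangement `σ` is the permutation `swap z (σ z) * σ`, which
is the first-return map on the complement of `z`. Two erasures determine a cyclic arrangement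
up to exchanging the two erased points `x, y`, so compatibility of the arrangements at `x` and
`y` yields `ρ` such that every other point `z` is correctly erased either from `ρ` or from its
flip `swap x y * ρ * swap x y`. Mixing the two at different points `w ≠ z` is impossible: it
would make the cycle left after erasing `w` and `z` (at least three points) invariant under
conjugation by `swap x y`. Hence one of the two is right off `{x, y}`; running the argument
again for a pair disjoint from `{x, y}` gives an arrangement right at every point.
-/

section

open Equiv Finset

variable {α : Type*}

namespace IsCyclicArrangement

variable {S : Finset α} {σ : Perm α}

lemma apply_mem (h : IsCyclicArrangement S σ) {a : α} (ha : a ∈ S) : σ a ∈ S := by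
  by_contra hσa
  exact hσa (by rwa [σ.injective (h.1 _ hσa)])

lemma apply_ne (h : IsCyclicArrangement S σ) (hS : 2 ≤ #S) {a : α} (ha : a ∈ S) :
    σ a ≠ a := by
  intro hfix
  obtain ⟨b, hb, hba⟩ := exists_mem_ne hS a
  obtain ⟨m, hm⟩ := h.2 a ha b hb
  exact hba (hm ▸ Perm.pow_apply_eq_self_of_apply_eq_self hfix m)

lemma conj (h : IsCyclicArrangement S σ) {g : Perm α} (hg : ∀ a, g a ∈ S ↔ a ∈ S) :
    IsCyclicArrangement S (g * σ * g⁻¹) := by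
  have hg' : ∀ a, g⁻¹ a ∈ S ↔ a ∈ S := fun a => by simpa using (hg (g⁻¹ a)).symm
  refine ⟨fun a ha => ?_, fun a ha b hb => ?_⟩
  · rw [Perm.mul_apply, Perm.mul_apply, h.1 _ ((hg' a).not.mpr ha)]
    simp
  · obtain ⟨m, hm⟩ := h.2 _ ((hg' a).mpr ha) _ ((hg' b).mpr hb)
    exact ⟨m, by rw [conj_pow, Perm.mul_apply, Perm.mul_apply, hm]; simp⟩

end IsCyclicArrangement

namespace IsFirstReturnMap

variable {ρ π : Perm α} {A : Finset α}

lemma unique {π' : Perm α} (h : IsFirstReturnMap ρ A π) (h' : IsFirstReturnMap ρ A π') :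
    π = π' := by
  ext a
  by_cases ha : a ∈ A
  · obtain ⟨m, hm, hmA, hmin, hπa⟩ := h.2 a ha
    obtain ⟨m', hm', hmA', hmin', hπa'⟩ := h'.2 a ha
    obtain hlt | rfl | hlt := lt_trichotomy m m'
    · exact absurd hmA (hmin' m hm hlt)
    · rw [hπa, hπa']
    · exact absurd hmA' (hmin m' hm' hlt)
  · rw [h.1 a ha, h'.1 a ha]

lemma exists_pow_eq (h : IsFirstReturnMap ρ A π) (n : ℕ) :
    ∀ a ∈ A, (ρ ^ n) a ∈ A → ∃ m, (π ^ m) a = (ρ ^ n) a := by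
  induction n using Nat.strong_induction_on with
  | _ n ih =>
    intro a ha hn
    rcases Nat.eq_zero_or_pos n with rfl | hpos
    · exact ⟨0, rfl⟩
    obtain ⟨d, hd, hdA, hdmin, hπa⟩ := h.2 a ha
    have hdn : d ≤ n := by
      by_contra! hlt
      exact hdmin n hpos hlt hn
    have hsplit : (ρ ^ n) a = (ρ ^ (n - d)) ((ρ ^ d) a) := by
      rw [← Perm.mul_apply, ← pow_add, Nat.sub_add_cancel hdn]
    obtain ⟨m, hm⟩ := ih (n - d) (by omega) _ hdA (hsplit ▸ hn)
    exact ⟨m + 1, by rw [pow_succ, Perm.mul_apply, hπa, hm, hsplit]⟩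

lemma isCyclicArrangement {S : Finset α} (h : IsFirstReturnMap ρ A π)
    (hρ : IsCyclicArrangement S ρ) (hA : A ⊆ S) : IsCyclicArrangement A π := by
  refine ⟨h.1, fun a ha b hb => ?_⟩
  obtain ⟨n, rfl⟩ := hρ.2 a (hA ha) b (hA hb)
  exact h.exists_pow_eq n a ha hb

end IsFirstReturnMap

variable [DecidableEq α]

namespace IsCyclicArrangement

variable {S : Finset α} {σ : Perm α}

lemma swap_conj (h : IsCyclicArrangement S σ) {x y : α} (hx : x ∈ S) (hy : y ∈ S) :
    IsCyclicArrangement S (swap x y * σ * swap x y) := by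
  simpa using h.conj (g := swap x y) fun a => by
    rw [swap_apply_def]; split_ifs <;> simp_all

lemma swap_conj_ne (h : IsCyclicArrangement S σ) (hS : 3 ≤ #S) {x y : α} (hx : x ∈ S)
    (hxy : x ≠ y) : swap x y * σ * swap x y ≠ σ := by
  intro hσ
  have hcomm : ∀ a, σ (swap x y a) = swap x y (σ a) := fun a => by
    conv_rhs => rw [← hσ]
    simp
  have hσx : σ x = y := by
    by_contra hne
    have := hcomm x
    rw [swap_apply_left, swap_apply_of_ne_of_ne (h.apply_ne (by omega) hx) hne] at this
    exact hxy (σ.injective this).symm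
  have hσy : σ y = x := by simpa [hσx] using hcomm x
  have horbit : ∀ m, (σ ^ m) x = x ∨ (σ ^ m) x = y := by
    intro m
    induction m with
    | zero => simp
    | succ m ih => rcases ih with ih | ih <;> simp [pow_succ', ih, hσx, hσy]
  obtain ⟨c, hc, hcxy⟩ := exists_mem_notMem_of_card_lt_card
    (lt_of_le_of_lt card_le_two (by omega : 2 < #S)) (s := {x, y})
  obtain ⟨m, hm⟩ := h.2 x hx c hc
  rcases horbit m with h' | h' <;> simp_all

end IsCyclicArrangement

/-- `σ` with the point `z` cut out of its cycle: `σ⁻¹ z ↦ σ z` and `z ↦ z`. -/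
def cycleErase (z : α) (σ : Perm α) : Perm α := swap z (σ z) * σ

lemma IsCyclicArrangement.isFirstReturnMap_cycleErase {S : Finset α} {σ : Perm α}
    (h : IsCyclicArrangement S σ) (z : α) :
    IsFirstReturnMap σ (S.erase z) (cycleErase z σ) := by
  have hfix : ∀ {a}, a ≠ z → σ a ≠ σ z := fun haz => σ.injective.ne haz
  refine ⟨fun a ha => ?_, fun a ha => ?_⟩
  · rcases eq_or_ne a z with rfl | haz
    · exact swap_apply_right _ _
    have hσa : σ a = a := h.1 a fun haS => ha (mem_erase.2 ⟨haz, haS⟩)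
    rw [cycleErase, Perm.mul_apply, hσa, swap_apply_of_ne_of_ne haz (hσa ▸ hfix haz)]
  obtain ⟨haz, haS⟩ := mem_erase.1 ha
  by_cases hσa : σ a = z
  · have hσz : σ z ≠ z := fun h' => haz (σ.injective (h'.trans hσa.symm)).symm
    refine ⟨2, two_pos, ?_, fun j hj hj2 => ?_, ?_⟩
    · rw [pow_two, Perm.mul_apply, hσa]
      exact mem_erase.2 ⟨hσz, h.apply_mem (hσa ▸ h.apply_mem haS)⟩
    · obtain rfl : j = 1 := by omega
      simp [hσa]
    · rw [cycleErase, pow_two, Perm.mul_apply, Perm.mul_apply, hσa, swap_apply_left]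
  · refine ⟨1, one_pos, ?_, fun j hj hj1 => by omega, ?_⟩
    · exact pow_one σ ▸ mem_erase.2 ⟨hσa, h.apply_mem haS⟩
    · rw [cycleErase, pow_one, Perm.mul_apply, swap_apply_of_ne_of_ne hσa (hfix haz)]

lemma IsCyclicArrangement.erase {S : Finset α} {σ : Perm α}
    (h : IsCyclicArrangement S σ) (z : α) :
    IsCyclicArrangement (S.erase z) (cycleErase z σ) :=
  (h.isFirstReturnMap_cycleErase z).isCyclicArrangement h (erase_subset z S)

lemma cycleErase_comm (x z : α) (σ : Perm α) :
    cycleErase x (cycleErase z σ) = cycleErase z (cycleErase x σ) := by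
  rcases eq_or_ne x z with rfl | hxz
  · rfl
  have hσ : σ x ≠ σ z := σ.injective.ne hxz
  simp only [cycleErase, Perm.mul_apply, ← mul_assoc]
  congr 1
  ext c
  simp only [Perm.mul_apply, swap_apply_def]
  split_ifs <;> grind

lemma cycleErase_conj (g σ : Perm α) (z : α) :
    cycleErase (g z) (g * σ * g⁻¹) = g * cycleErase z σ * g⁻¹ := by
  have hgz : (g * σ * g⁻¹) (g z) = g (σ z) := by simp
  rw [cycleErase, cycleErase, hgz, swap_apply_apply]
  group

lemma cycleErase_swap_conj (σ : Perm α) {x y z : α} (hzx : z ≠ x) (hzy : z ≠ y) :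
    cycleErase z (swap x y * σ * swap x y) = swap x y * cycleErase z σ * swap x y := by
  simpa [swap_apply_def, hzx, hzy] using cycleErase_conj (swap x y) σ z

lemma eq_swap_mul_swap_mul_of_cycleErase_eq {σ τ : Perm α} {z : α}
    (h : cycleErase z σ = cycleErase z τ) : σ = swap z (σ z) * swap z (τ z) * τ := by
  rw [mul_assoc, ← cycleErase, ← h, cycleErase, swap_mul_self_mul]

section TwoErasures

variable {S : Finset α} {D E : Perm α} {x y : α}

lemma eq_swap_conj_of_cycleErase_eq_of_apply_eq (hD : IsCyclicArrangement S D)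
    (hE : IsCyclicArrangement S E) (hS : 2 ≤ #S) (hx : x ∈ S) (hy : y ∈ S) (hxy : x ≠ y)
    (hEx : cycleErase x E = cycleErase x D) (hEy : cycleErase y E = cycleErase y D)
    (hne : E x ≠ D x) (hDy : D y = x) : E = swap x y * D * swap x y := by
  have hDx := hD.apply_ne hS hx
  have hEx' := hE.apply_ne hS hx
  have hEy' := hE.apply_ne hS hy
  have hc : swap x (E x) * swap x (D x) = swap y (E y) * swap y x := by
    have h := (eq_swap_mul_swap_mul_of_cycleErase_eq hEx).symm.trans
      (eq_swap_mul_swap_mul_of_cycleErase_eq hEy)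
    rw [hDy] at h
    exact mul_right_cancel h
  have hcx := congrArg (· x) hc
  have hcy := congrArg (· y) hc
  simp only [Perm.mul_apply, swap_apply_def] at hcx hcy
  have hExy : E x = y := by
    split_ifs at hcx hcy <;> grind
  have hDswap : swap x (D x) * D = D * swap x y := by
    rw [← hDy, swap_apply_apply, hDy, inv_mul_cancel_right, swap_comm]
  rw [eq_swap_mul_swap_mul_of_cycleErase_eq hEx, hExy, mul_assoc, hDswap, ← mul_assoc]

lemma eq_or_eq_swap_conj_of_cycleErase_eq (hD : IsCyclicArrangement S D)
    (hE : IsCyclicArrangement S E) (hS : 2 ≤ #S) (hx : x ∈ S) (hy : y ∈ S) (hxy : x ≠ y)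
    (hEx : cycleErase x E = cycleErase x D) (hEy : cycleErase y E = cycleErase y D) :
    E = D ∨ E = swap x y * D * swap x y := by
  by_cases hne : E x = D x
  · left
    simpa [cycleErase, hne] using hEx
  right
  -- `E * D⁻¹` moves `x`, yet it only moves points among `y, D y, E y`
  have hc : swap x (E x) * swap x (D x) = swap y (E y) * swap y (D y) :=
    mul_right_cancel ((eq_swap_mul_swap_mul_of_cycleErase_eq hEx).symm.trans
      (eq_swap_mul_swap_mul_of_cycleErase_eq hEy))
  have hcx := congrArg (· x) hc
  simp only [Perm.mul_apply, swap_apply_def] at hcx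
  have hx' : D y = x ∨ E y = x := by
    split_ifs at hcx <;> grind [hD.apply_ne hS hx]
  rcases hx' with hDy | hEy'
  · exact eq_swap_conj_of_cycleErase_eq_of_apply_eq hD hE hS hx hy hxy hEx hEy hne hDy
  · rw [eq_swap_conj_of_cycleErase_eq_of_apply_eq hE hD hS hx hy hxy hEx.symm hEy.symm
      (Ne.symm hne) hEy']
    simp [mul_assoc]

end TwoErasures

lemma IsCyclicArrangement.cycleErase_swap_conj_ne {V : Finset α} {ρ : Perm α}
    (hρ : IsCyclicArrangement V ρ) (hV : 4 ≤ #V) {x y z : α} (hx : x ∈ V) (hxy : x ≠ y)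
    (hz : z ∈ V) (hzx : z ≠ x) (hzy : z ≠ y) :
    cycleErase z (swap x y * ρ * swap x y) ≠ cycleErase z ρ := by
  rw [cycleErase_swap_conj ρ hzx hzy]
  exact (hρ.erase z).swap_conj_ne (by rw [card_erase_of_mem hz]; omega)
    (mem_erase.2 ⟨hzx.symm, hx⟩) hxy

/-- `P z` is the prescribed arrangement of `V.erase z`. -/
def PairwiseRealizable (V : Finset α) (P : α → Perm α) : Prop :=
  ∀ x ∈ V, ∀ y ∈ V, x ≠ y →
    ∃ ρ, IsCyclicArrangement V ρ ∧ cycleErase x ρ = P x ∧ cycleErase y ρ = P y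

namespace PairwiseRealizable

variable {V : Finset α} {P : α → Perm α} {ρ : Perm α} {x y : α}

lemma cycleErase_comm (hP : PairwiseRealizable V P) {z : α} (hx : x ∈ V) (hz : z ∈ V) :
    cycleErase x (P z) = cycleErase z (P x) := by
  rcases eq_or_ne x z with rfl | hxz
  · rfl
  obtain ⟨μ, -, hμx, hμz⟩ := hP x hx z hz hxz
  rw [← hμx, ← hμz, _root_.cycleErase_comm]

lemma cycleErase_eq_or_swap_conj (hP : PairwiseRealizable V P) (hV : 3 ≤ #V)
    (hρ : IsCyclicArrangement V ρ) (hx : x ∈ V) (hy : y ∈ V) (hxy : x ≠ y)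
    (hρx : cycleErase x ρ = P x) (hρy : cycleErase y ρ = P y) {z : α} (hz : z ∈ V)
    (hzx : z ≠ x) (hzy : z ≠ y) :
    cycleErase z ρ = P z ∨ cycleErase z (swap x y * ρ * swap x y) = P z := by
  obtain ⟨μ, hμ, -, hμz⟩ := hP x hx z hz hzx.symm
  have hS : 2 ≤ #(V.erase z) := by rw [card_erase_of_mem hz]; omega
  have hw : ∀ w ∈ V, cycleErase w ρ = P w →
      cycleErase w (P z) = cycleErase w (cycleErase z ρ) := fun w hw hρw => by
    rw [hP.cycleErase_comm hw hz, ← hρw, _root_.cycleErase_comm]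
  rw [cycleErase_swap_conj ρ hzx hzy]
  exact (eq_or_eq_swap_conj_of_cycleErase_eq (hρ.erase z) (hμz ▸ hμ.erase z) hS
    (mem_erase.2 ⟨hzx.symm, hx⟩) (mem_erase.2 ⟨hzy.symm, hy⟩) hxy (hw x hx hρx)
    (hw y hy hρy)).imp Eq.symm Eq.symm

/-- Erasing both `w` and `z` would leave a cycle on at least three points that is symmetric
under `swap x y`. -/
lemma cycleErase_swap_conj_ne_of_cycleErase_eq (hP : PairwiseRealizable V P) (hV : 5 ≤ #V)
    (hρ : IsCyclicArrangement V ρ) (hx : x ∈ V) (hxy : x ≠ y) {w z : α} (hw : w ∈ V)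
    (hz : z ∈ V) (hwz : w ≠ z) (hwx : w ≠ x) (hwy : w ≠ y) (hzx : z ≠ x) (hzy : z ≠ y)
    (hρw : cycleErase w ρ = P w) :
    cycleErase z (swap x y * ρ * swap x y) ≠ P z := by
  intro hσz
  have hsymm : swap x y * cycleErase z (cycleErase w ρ) * swap x y
      = cycleErase z (cycleErase w ρ) :=
    calc swap x y * cycleErase z (cycleErase w ρ) * swap x y
        = cycleErase w (cycleErase z (swap x y * ρ * swap x y)) := by
          rw [cycleErase_swap_conj ρ hzx hzy, cycleErase_swap_conj _ hwx hwy,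
            _root_.cycleErase_comm]
      _ = cycleErase z (cycleErase w ρ) := by
          rw [hσz, hρw, hP.cycleErase_comm hw hz]
  refine ((hρ.erase w).erase z).swap_conj_ne ?_ ?_ hxy hsymm
  · rw [card_erase_of_mem (mem_erase.2 ⟨hwz.symm, hz⟩), card_erase_of_mem hw]
    omega
  · exact mem_erase.2 ⟨hzx.symm, mem_erase.2 ⟨hwx.symm, hx⟩⟩

lemma forall_cycleErase_eq_or_forall_swap_conj (hP : PairwiseRealizable V P) (hV : 5 ≤ #V)
    (hρ : IsCyclicArrangement V ρ) (hx : x ∈ V) (hy : y ∈ V) (hxy : x ≠ y)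
    (hρx : cycleErase x ρ = P x) (hρy : cycleErase y ρ = P y) :
    (∀ z ∈ V, z ≠ x → z ≠ y → cycleErase z ρ = P z) ∨
      ∀ z ∈ V, z ≠ x → z ≠ y → cycleErase z (swap x y * ρ * swap x y) = P z := by
  have hdich : ∀ z ∈ V, z ≠ x → z ≠ y →
      cycleErase z ρ = P z ∨ cycleErase z (swap x y * ρ * swap x y) = P z := fun z hz =>
    hP.cycleErase_eq_or_swap_conj (by omega) hρ hx hy hxy hρx hρy hz
  by_cases hall : ∀ z ∈ V, z ≠ x → z ≠ y → cycleErase z ρ = P z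
  · exact .inl hall
  push Not at hall
  obtain ⟨z₀, hz₀, hz₀x, hz₀y, hρz₀⟩ := hall
  have hσz₀ := (hdich z₀ hz₀ hz₀x hz₀y).resolve_left hρz₀
  refine .inr fun w hw hwx hwy => (hdich w hw hwx hwy).resolve_left fun hρw => ?_
  rcases eq_or_ne w z₀ with rfl | hwz₀
  · exact hρz₀ hρw
  · exact hP.cycleErase_swap_conj_ne_of_cycleErase_eq hV hρ hx hxy hw hz₀ hwz₀ hwx hwy
      hz₀x hz₀y hρw hσz₀

lemma exists_forall_cycleErase_eq_off_pair (hP : PairwiseRealizable V P) (hV : 5 ≤ #V) {x y : α}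
    (hx : x ∈ V) (hy : y ∈ V) (hxy : x ≠ y) :
    ∃ τ, IsCyclicArrangement V τ ∧ ∀ z ∈ V, z ≠ x → z ≠ y → cycleErase z τ = P z := by
  obtain ⟨ρ, hρ, hρx, hρy⟩ := hP x hx y hy hxy
  exact (hP.forall_cycleErase_eq_or_forall_swap_conj hV hρ hx hy hxy hρx hρy).elim
    (⟨ρ, hρ, ·⟩) (⟨_, hρ.swap_conj hx hy, ·⟩)

/-- Take `τ` right off a pair `{x, y}` and run the dichotomy again for a pair `{z₁, z₂}`
disjoint from it: the flip of `τ` at `{z₁, z₂}` is excluded at a fifth point `z₃`. -/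
lemma exists_forall_cycleErase_eq (hP : PairwiseRealizable V P) (hV : 5 ≤ #V) :
    ∃ σ, IsCyclicArrangement V σ ∧ ∀ z ∈ V, cycleErase z σ = P z := by
  obtain ⟨x, hx, y, hy, hxy⟩ := one_lt_card.1 (by omega : 1 < #V)
  obtain ⟨τ, hτ, hτxy⟩ := hP.exists_forall_cycleErase_eq_off_pair hV hx hy hxy
  have hrest : 2 < #(V \ {x, y}) := by
    have := le_card_sdiff {x, y} V
    have := card_le_two (a := x) (b := y)
    omega
  obtain ⟨z₁, hz₁, z₂, hz₂, h₁₂⟩ := one_lt_card.1 (by omega : 1 < #(V \ {x, y}))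
  simp only [mem_sdiff, mem_insert, mem_singleton, not_or] at hz₁ hz₂
  obtain ⟨z₃, hz₃, hz₃'⟩ := exists_mem_notMem_of_card_lt_card
    (lt_of_le_of_lt card_le_four (by omega : 4 < #V)) (s := {x, y, z₁, z₂})
  simp only [mem_insert, mem_singleton, not_or] at hz₃'
  have hτ₁ := hτxy z₁ hz₁.1 hz₁.2.1 hz₁.2.2
  have hτ₂ := hτxy z₂ hz₂.1 hz₂.2.1 hz₂.2.2
  rcases hP.forall_cycleErase_eq_or_forall_swap_conj hV hτ hz₁.1 hz₂.1 h₁₂ hτ₁ hτ₂ with h | h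
  · refine ⟨τ, hτ, fun z hz => ?_⟩
    by_cases hz₁₂ : z = z₁ ∨ z = z₂
    · rcases hz₁₂ with rfl | rfl <;> assumption
    · push Not at hz₁₂
      exact h z hz hz₁₂.1 hz₁₂.2
  · exact absurd ((h z₃ hz₃ hz₃'.2.2.1 hz₃'.2.2.2).trans (hτxy z₃ hz₃ hz₃'.1 hz₃'.2.1).symm)
      (hτ.cycleErase_swap_conj_ne (by omega) hz₁.1 h₁₂ hz₃ hz₃'.2.2.1 hz₃'.2.2.2)

end PairwiseRealizable

lemma pairwiseRealizable_of_cyclicCompatible {V : Finset α} {π : Finset α → Perm α}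
    (h : ∀ x ∈ V, ∀ y ∈ V, x ≠ y →
      CyclicCompatible (V.erase x) (V.erase y) (π (V.erase x)) (π (V.erase y))) :
    PairwiseRealizable V fun z => π (V.erase z) := by
  intro x hx y hy hxy
  obtain ⟨ρ, hρ, hρx, hρy⟩ := h x hx y hy hxy
  have hV : V.erase x ∪ V.erase y = V := by
    ext a
    simp only [mem_union, mem_erase]
    grind
  rw [hV] at hρ
  exact ⟨ρ, hρ, (hρ.isFirstReturnMap_cycleErase x).unique hρx,
    (hρ.isFirstReturnMap_cycleErase y).unique hρy⟩

end

theorem stmt3_general {α : Type*} [DecidableEq α] (k : ℕ) (hk : 4 ≤ k)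
    (V : Finset α) (hV : V.card = k + 1) (π : Finset α → Equiv.Perm α)
    (hcomp : ∀ F, F ⊆ V → ∀ F', F' ⊆ V → F.card = k → F'.card = k → F ≠ F' →
      CyclicCompatible F F' (π F) (π F')) :
    ∃ σ : Equiv.Perm α, IsCyclicArrangement V σ ∧
      ∀ F ⊆ V, F.card = k → IsFirstReturnMap σ F (π F) := by
  have hcard : ∀ z ∈ V, (V.erase z).card = k := fun z hz => by
    rw [Finset.card_erase_of_mem hz, hV]; rfl
  have hP : PairwiseRealizable V fun z => π (V.erase z) :=
    pairwiseRealizable_of_cyclicCompatible fun x hx y hy hxy =>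
      hcomp _ (V.erase_subset x) _ (V.erase_subset y) (hcard x hx) (hcard y hy)
        ((Finset.erase_inj V hx).not.2 hxy)
  obtain ⟨σ, hσ, hσP⟩ := hP.exists_forall_cycleErase_eq (by omega)
  refine ⟨σ, hσ, fun F hF hFk => ?_⟩
  obtain ⟨z, hz, rfl⟩ := (Finset.covBy_iff_card_sdiff_eq_one.2
    ⟨hF, by rw [Finset.card_sdiff_of_subset hF]; omega⟩).exists_finset_erase
  exact hσP z hz ▸ hσ.isFirstReturnMap_cycleErase z

/-- If pairwise compatible cyclic arrangements are given on all `k`-element subsets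
of a `(k+1)`-element set `V` (with `k ≥ 4`), then there is a cyclic arrangement of
`V` whose first-return map on every `k`-element subset `F` is `π F`. -/
theorem stmt3 {α : Type*} [DecidableEq α] (k : ℕ) (hk : 4 ≤ k)
    (V : Finset α) (hV : V.card = k + 1) (π : Finset α → Equiv.Perm α)
    (hcyc : ∀ F ⊆ V, F.card = k → IsCyclicArrangement F (π F))
    (hcomp : ∀ F, F ⊆ V → ∀ F', F' ⊆ V → F.card = k → F'.card = k → F ≠ F' →
      CyclicCompatible F F' (π F) (π F')) :
    ∃ σ : Equiv.Perm α, IsCyclicArrangement V σ ∧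
      ∀ F ⊆ V, F.card = k → IsFirstReturnMap σ F (π F) :=
  stmt3_general k hk V hV π hcomp
end

section
/- Let V be a finite set with |V| ≥ 5. Suppose that for every subset F ⊆ V with |F| = 4 a cyclic arrangement π_F of F is given, and that π_F and π_{F'} are compatible whenever |F ∩ F'| = 3. Then there exists a cyclic arrangement π of V whose first-return map on every 4-element subset F of V equals π_F. -/
set_option linter.unusedVariables false
set_option linter.unusedSectionVars false


namespace CycAux

variable {α : Type*}

open Classical in
/-- first arrival time from `a` to `b` under `σ` (junk value 0 if unreachable). -/
noncomputable def time (σ : Equiv.Perm α) (a b : α) : ℕ :=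
  if h : ∃ m : ℕ, (σ ^ m) a = b then Nat.find h else 0

theorem time_spec {σ : Equiv.Perm α} {a b : α} (h : ∃ m : ℕ, (σ ^ m) a = b) :
    (σ ^ time σ a b) a = b := by
  classical
  rw [time, dif_pos h]
  exact Nat.find_spec h

theorem time_le {σ : Equiv.Perm α} {a b : α} {j : ℕ} (hj : (σ ^ j) a = b) :
    time σ a b ≤ j := by
  classical
  rw [time, dif_pos ⟨j, hj⟩]
  exact Nat.find_le hj

@[simp] theorem time_self (σ : Equiv.Perm α) (a : α) : time σ a a = 0 :=
  Nat.le_zero.mp (time_le (by simp))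

theorem time_pos {σ : Equiv.Perm α} {a b : α} (hab : a ≠ b)
    (h : ∃ m : ℕ, (σ ^ m) a = b) : 0 < time σ a b := by
  rcases (time σ a b).eq_zero_or_pos with h' | h'
  · exact absurd (by simpa [h'] using time_spec h) hab
  · exact h'

theorem time_inj {σ : Equiv.Perm α} {a b c : α}
    (hb : ∃ m : ℕ, (σ ^ m) a = b) (hc : ∃ m : ℕ, (σ ^ m) a = c)
    (h : time σ a b = time σ a c) : b = c := by
  rw [← time_spec hb, ← time_spec hc, h]

theorem cyc_mem {S : Finset α} {σ : Equiv.Perm α} (hσ : IsCyclicArrangement S σ)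
    {a : α} (ha : a ∈ S) : σ a ∈ S := by
  by_contra h
  have h1 : σ (σ a) = σ a := hσ.1 _ h
  have : σ a = a := σ.injective h1
  rw [this] at h
  exact h ha

theorem cyc_pow_mem {S : Finset α} {σ : Equiv.Perm α} (hσ : IsCyclicArrangement S σ)
    {a : α} (ha : a ∈ S) (m : ℕ) : (σ ^ m) a ∈ S := by
  induction m with
  | zero => simpa using ha
  | succ n ih => rw [pow_succ', Equiv.Perm.mul_apply]; exact cyc_mem hσ ih

open Classical in
/-- the period of points of a cycle (junk 0 if no positive return). -/
noncomputable def per (σ : Equiv.Perm α) (a : α) : ℕ :=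
  if h : ∃ m : ℕ, 0 < m ∧ (σ ^ m) a = a then Nat.find h else 0

section

variable {S : Finset α} {σ : Equiv.Perm α} (hσ : IsCyclicArrangement S σ)

include hσ

theorem per_exists {a b : α} (ha : a ∈ S) (hb : b ∈ S) (hab : a ≠ b) :
    ∃ m : ℕ, 0 < m ∧ (σ ^ m) a = a := by
  obtain ⟨m1, hm1⟩ := hσ.2 a ha b hb
  obtain ⟨m2, hm2⟩ := hσ.2 b hb a ha
  refine ⟨m2 + m1, ?_, ?_⟩
  · rcases Nat.eq_zero_or_pos (m2 + m1) with h | h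
    swap
    · exact h
    · exfalso
      have h1 : m1 = 0 := by omega
      rw [h1] at hm1
      exact hab (by simpa using hm1)
  · rw [pow_add, Equiv.Perm.mul_apply, hm1, hm2]

theorem per_pos {a b : α} (ha : a ∈ S) (hb : b ∈ S) (hab : a ≠ b) :
    0 < per σ a ∧ (σ ^ per σ a) a = a := by
  classical
  have h := per_exists hσ ha hb hab
  rw [per, dif_pos h]
  exact Nat.find_spec h

omit hσ in
theorem per_min {a : α} {j : ℕ} (hj : 0 < j) (hja : (σ ^ j) a = a)
    (h : ∃ m : ℕ, 0 < m ∧ (σ ^ m) a = a) : per σ a ≤ j := by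
  classical
  rw [per, dif_pos h]
  exact Nat.find_le ⟨hj, hja⟩

end


theorem pow_shift {σ : Equiv.Perm α} {a : α} {p t : ℕ} (hpt : p ≤ t)
    (hpa : (σ ^ p) a = a) : (σ ^ t) a = (σ ^ (t - p)) a := by
  have h : σ ^ t = σ ^ (t - p) * σ ^ p := by
    rw [← pow_add]; congr 1; omega
  rw [h, Equiv.Perm.mul_apply, hpa]

section

variable {S : Finset α} {σ : Equiv.Perm α} (hσ : IsCyclicArrangement S σ)

include hσ

theorem time_lt_per {a b : α} (ha : a ∈ S) (hb : b ∈ S) (hab : a ≠ b) :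
    time σ a b < per σ a := by
  obtain ⟨hp, hpa⟩ := per_pos hσ ha hb hab
  have ht : (σ ^ time σ a b) a = b := time_spec (hσ.2 a ha b hb)
  by_contra h
  push_neg at h
  have h2 : (σ ^ (time σ a b - per σ a)) a = b := by
    rw [← pow_shift h hpa]; exact ht
  have := time_le h2
  omega

theorem time_unique {a b : α} (ha : a ∈ S) (hb : b ∈ S) (hab : a ≠ b) {j : ℕ}
    (hja : (σ ^ j) a = b) (hj : j < per σ a) : j = time σ a b := by
  obtain ⟨hp, hpa⟩ := per_pos hσ ha hb hab
  have hle : time σ a b ≤ j := time_le hja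
  set t := time σ a b with htdef
  have ht : (σ ^ t) a = b := time_spec (hσ.2 a ha b hb)
  by_contra hne
  have htj : t < j := by omega
  -- σ^(j-t) fixes b, and a = σ^(p-t) b, so σ^(j-t) fixes a
  have hfixb : (σ ^ (j - t)) b = b := by
    have : (σ ^ (j - t)) ((σ ^ t) a) = (σ ^ j) a := by
      rw [← Equiv.Perm.mul_apply, ← pow_add]; congr 2; omega
    rw [ht] at this; rw [this, hja]
  have htp : t < per σ a := time_lt_per hσ ha hb hab
  have hab2 : (σ ^ (per σ a - t)) b = a := by
    have : (σ ^ (per σ a - t)) ((σ ^ t) a) = (σ ^ per σ a) a := by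
      rw [← Equiv.Perm.mul_apply, ← pow_add]; congr 2; omega
    rw [ht] at this; rw [this, hpa]
  have hfixa : (σ ^ (j - t)) a = a := by
    calc (σ ^ (j - t)) a = (σ ^ (j - t)) ((σ ^ (per σ a - t)) b) := by rw [hab2]
    _ = (σ ^ (per σ a - t)) ((σ ^ (j - t)) b) := by
        rw [← Equiv.Perm.mul_apply, ← Equiv.Perm.mul_apply, ← pow_add, ← pow_add,
          Nat.add_comm]
    _ = a := by rw [hfixb, hab2]
  have := per_min (σ := σ) (a := a) (by omega) hfixa ⟨per σ a, hp, hpa⟩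
  omega

theorem per_eq {a b : α} (ha : a ∈ S) (hb : b ∈ S) (hab : a ≠ b) :
    per σ a = per σ b := by
  have key : ∀ x y : α, x ∈ S → y ∈ S → x ≠ y → per σ y ≤ per σ x := by
    intro x y hx hy hxy
    obtain ⟨hp, hpa⟩ := per_pos hσ hx hy hxy
    have ht : (σ ^ time σ x y) x = y := time_spec (hσ.2 x hx y hy)
    have hfix : (σ ^ per σ x) y = y := by
      calc (σ ^ per σ x) y = (σ ^ per σ x) ((σ ^ time σ x y) x) := by rw [ht]
      _ = (σ ^ time σ x y) ((σ ^ per σ x) x) := by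
          rw [← Equiv.Perm.mul_apply, ← Equiv.Perm.mul_apply, ← pow_add, ← pow_add,
            Nat.add_comm]
      _ = y := by rw [hpa, ht]
    exact per_min hp hfix ⟨per σ x, hp, hfix⟩
  exact le_antisymm (key b a hb ha hab.symm) (key a b ha hb hab)

theorem time_sub {a b c : α} (ha : a ∈ S) (hb : b ∈ S) (hc : c ∈ S)
    (hab : a ≠ b) (hac : a ≠ c) (hbc : b ≠ c)
    (h : time σ a b < time σ a c) : time σ b c = time σ a c - time σ a b := by
  have ht1 : (σ ^ time σ a b) a = b := time_spec (hσ.2 a ha b hb)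
  have ht2 : (σ ^ time σ a c) a = c := time_spec (hσ.2 a ha c hc)
  have hs : (σ ^ (time σ a c - time σ a b)) b = c := by
    calc (σ ^ (time σ a c - time σ a b)) b
        = (σ ^ (time σ a c - time σ a b)) ((σ ^ time σ a b) a) := by rw [ht1]
      _ = (σ ^ time σ a c) a := by
          rw [← Equiv.Perm.mul_apply, ← pow_add]; congr 2; omega
      _ = c := ht2
  have hlt : time σ a c - time σ a b < per σ b := by
    have h1 := time_lt_per hσ ha hc hac
    have h2 := per_eq hσ ha hb hab
    omega
  exact (time_unique hσ hb hc hbc hs hlt).symm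

theorem time_back {a b : α} (ha : a ∈ S) (hb : b ∈ S) (hab : a ≠ b) :
    time σ b a = per σ a - time σ a b := by
  obtain ⟨hp, hpa⟩ := per_pos hσ ha hb hab
  have ht1 : (σ ^ time σ a b) a = b := time_spec (hσ.2 a ha b hb)
  have htpos : 0 < time σ a b := time_pos hab (hσ.2 a ha b hb)
  have htlt : time σ a b < per σ a := time_lt_per hσ ha hb hab
  have hs : (σ ^ (per σ a - time σ a b)) b = a := by
    calc (σ ^ (per σ a - time σ a b)) b
        = (σ ^ (per σ a - time σ a b)) ((σ ^ time σ a b) a) := by rw [ht1]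
      _ = (σ ^ per σ a) a := by
          rw [← Equiv.Perm.mul_apply, ← pow_add]; congr 2; omega
      _ = a := hpa
  have hlt : per σ a - time σ a b < per σ b := by
    have := per_eq hσ ha hb hab
    omega
  exact (time_unique hσ hb ha hab.symm hs hlt).symm

theorem time_total {a b c : α} (ha : a ∈ S) (hb : b ∈ S) (hc : c ∈ S)
    (hbc : b ≠ c) : time σ a b ≠ time σ a c := fun h =>
  hbc (time_inj (hσ.2 a ha b hb) (hσ.2 a ha c hc) h)

/-- rotation invariance of the induced cyclic order -/
theorem time_rot {a b c : α} (ha : a ∈ S) (hb : b ∈ S) (hc : c ∈ S)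
    (hab : a ≠ b) (hac : a ≠ c) (hbc : b ≠ c) :
    (time σ a b < time σ a c ↔ time σ b c < time σ b a) := by
  constructor
  · intro h
    have h1 := time_sub hσ ha hb hc hab hac hbc h
    have h2 := time_back hσ ha hb hab
    have h3 := time_lt_per hσ ha hc hac
    have h4 := time_pos hab (hσ.2 a ha b hb)
    omega
  · intro h
    by_contra h'
    have hne := time_total hσ ha hb hc hbc
    have h'' : time σ a c < time σ a b := by omega
    have h1 := time_sub hσ ha hc hb hac hab hbc.symm h''
    have h2 := time_back hσ ha hb hab
    have h3 := time_back hσ ha hc hac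
    have h4 := time_lt_per hσ ha hb hab
    have h5 := time_pos hac (hσ.2 a ha c hc)
    have h6 := time_pos hab (hσ.2 a ha b hb)
    -- time σ b c = per - (time a b) + (time a c); derive contradiction with h
    have hs : (σ ^ (per σ a - time σ a b + time σ a c)) b = c := by
      have ht1 : (σ ^ time σ a b) a = b := time_spec (hσ.2 a ha b hb)
      have ht2 : (σ ^ time σ a c) a = c := time_spec (hσ.2 a ha c hc)
      obtain ⟨hp, hpa⟩ := per_pos hσ ha hb hab
      calc (σ ^ (per σ a - time σ a b + time σ a c)) b
          = (σ ^ (per σ a - time σ a b + time σ a c)) ((σ ^ time σ a b) a) := by rw [ht1]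
        _ = (σ ^ (per σ a + time σ a c)) a := by
            rw [← Equiv.Perm.mul_apply, ← pow_add]; congr 2; omega
        _ = (σ ^ time σ a c) ((σ ^ per σ a) a) := by
            rw [← Equiv.Perm.mul_apply, ← pow_add]; congr 2; omega
        _ = c := by rw [hpa, ht2]
    have hlt : per σ a - time σ a b + time σ a c < per σ b := by
      have := per_eq hσ ha hb hab
      omega
    have := time_unique hσ hb hc hbc hs hlt
    omega

/-- transitivity helper: comparing from a different base point -/
theorem time_trans {v a b c : α} (hv : v ∈ S) (ha : a ∈ S) (hb : b ∈ S) (hc : c ∈ S)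
    (hva : v ≠ a) (hvb : v ≠ b) (hvc : v ≠ c) (hab : a ≠ b) (hac : a ≠ c) (hbc : b ≠ c)
    (h1 : time σ v a < time σ v b) (h2 : time σ v b < time σ v c) :
    time σ a b < time σ a c := by
  have e1 := time_sub hσ hv ha hb hva hvb hab h1
  have e2 := time_sub hσ hv ha hc hva hvc hac (by omega)
  omega

end

/-- The key first-return lemma: first-arrival times under the first-return map
on `A` are a strictly monotone reindexing of those under `ρ`. -/
theorem firstReturn_time_lt_iff {T A : Finset α} {ρ τ : Equiv.Perm α}
    (hAT : A ⊆ T) (hρ : IsCyclicArrangement T ρ) (hτc : IsCyclicArrangement A τ)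
    (hτ : IsFirstReturnMap ρ A τ) {a b c : α} (ha : a ∈ A) (hb : b ∈ A) (hc : c ∈ A) :
    (time τ a b < time τ a c ↔ time ρ a b < time ρ a c) := by
  classical
  obtain ⟨hfix, hret⟩ := hτ
  choose! δ hδ1 hδ2 hδ3 hδ4 using hret
  set M : ℕ → ℕ := fun k => Nat.rec 0 (fun k mk => mk + δ ((τ ^ k) a)) k with hMdef
  have hM0 : M 0 = 0 := rfl
  have hMS : ∀ k, M (k + 1) = M k + δ ((τ ^ k) a) := fun k => rfl
  have hmemA : ∀ k, (τ ^ k) a ∈ A := fun k => cyc_pow_mem hτc ha k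
  have hM : ∀ k, (τ ^ k) a = (ρ ^ M k) a := by
    intro k
    induction k with
    | zero => simp [hM0]
    | succ n ih =>
      have hx := hmemA n
      calc (τ ^ (n + 1)) a = τ ((τ ^ n) a) := by
            rw [pow_succ', Equiv.Perm.mul_apply]
        _ = (ρ ^ δ ((τ ^ n) a)) ((τ ^ n) a) := hδ4 _ hx
        _ = (ρ ^ δ ((τ ^ n) a)) ((ρ ^ M n) a) := by rw [← ih]
        _ = (ρ ^ M (n + 1)) a := by
            rw [← Equiv.Perm.mul_apply, ← pow_add, hMS]; congr 2; omega
  have hMmono : StrictMono M := by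
    apply strictMono_nat_of_lt_succ
    intro n
    have := hδ1 _ (hmemA n)
    rw [hMS]; omega
  have hsurj : ∀ j, (ρ ^ j) a ∈ A → ∃ k, M k = j := by
    have key : ∀ K, ∀ j ≤ M K, (ρ ^ j) a ∈ A → ∃ k, M k = j := by
      intro K
      induction K with
      | zero => intro j hj _; exact ⟨0, by omega⟩
      | succ n ih =>
        intro j hj hjA
        rcases le_or_gt j (M n) with h | h
        · exact ih j h hjA
        · rcases eq_or_lt_of_le hj with h' | h'
          · exact ⟨n + 1, h'.symm⟩
          · exfalso
            have hgap : (ρ ^ (j - M n)) ((τ ^ n) a) ∉ A := by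
              apply hδ3 _ (hmemA n) _ (by omega)
              rw [hMS] at h'; omega
            apply hgap
            have : (ρ ^ (j - M n)) ((τ ^ n) a) = (ρ ^ j) a := by
              rw [hM n, ← Equiv.Perm.mul_apply, ← pow_add]; congr 2; omega
            rw [this]; exact hjA
    intro j hjA
    exact key j j (hMmono.le_apply) hjA
  have keyeq : ∀ x, x ∈ A → time ρ a x = M (time τ a x) := by
    intro x hx
    have hhitρ : ∃ m, (ρ ^ m) a = x := hρ.2 a (hAT ha) x (hAT hx)
    have hhitτ : ∃ m, (τ ^ m) a = x := hτc.2 a ha x hx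
    have hspecρ : (ρ ^ time ρ a x) a = x := time_spec hhitρ
    obtain ⟨k, hk⟩ := hsurj (time ρ a x) (by rw [hspecρ]; exact hx)
    have h1 : time τ a x ≤ k := time_le (by rw [hM k, hk]; exact hspecρ)
    have h2 : time ρ a x ≤ M (time τ a x) := time_le (by rw [← hM]; exact time_spec hhitτ)
    have h3 : k ≤ time τ a x := by
      rw [← hMmono.le_iff_le]; omega
    have heq : k = time τ a x := le_antisymm h3 h1
    rw [← heq, hk]
  rw [keyeq b hb, keyeq c hc, hMmono.lt_iff_lt]

end CycAux


namespace CycAux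

variable {α : Type*} [DecidableEq α]

theorem card3 {a b c : α} (hab : a ≠ b) (hac : a ≠ c) (hbc : b ≠ c) :
    ({a, b, c} : Finset α).card = 3 := by
  rw [Finset.card_insert_of_notMem (by simp [hab, hac]),
    Finset.card_insert_of_notMem (by simp [hbc]), Finset.card_singleton]

theorem card4 {a b c d : α} (hab : a ≠ b) (hac : a ≠ c) (had : a ≠ d)
    (hbc : b ≠ c) (hbd : b ≠ d) (hcd : c ≠ d) :
    ({a, b, c, d} : Finset α).card = 4 := by
  rw [Finset.card_insert_of_notMem (by simp [hab, hac, had]),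
    Finset.card_insert_of_notMem (by simp [hbc, hbd]),
    Finset.card_insert_of_notMem (by simp [hcd]), Finset.card_singleton]

/-- the cyclic-order relation induced by the family `π` of 4-cycles. -/
def Rel (π : Finset α → Equiv.Perm α) (V : Finset α) (a b c : α) : Prop :=
  ∃ w ∈ V, w ∉ ({a, b, c} : Finset α) ∧
    time (π {a, b, c, w}) a b < time (π {a, b, c, w}) a c

theorem rel_irrefl {π : Finset α → Equiv.Perm α} {V : Finset α} {a b : α}
    (h : Rel π V a b b) : False := by
  obtain ⟨w, _, _, h⟩ := h
  exact lt_irrefl _ h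

section

variable {V : Finset α} {π : Finset α → Equiv.Perm α}
  (hV : 5 ≤ V.card)
  (hcyc : ∀ F ⊆ V, F.card = 4 → IsCyclicArrangement F (π F))
  (hcomp : ∀ F, F ⊆ V → ∀ F', F' ⊆ V → F.card = 4 → F'.card = 4 →
      (F ∩ F').card = 3 → CyclicCompatible F F' (π F) (π F'))

include hcyc hcomp

theorem rel_iff_time {a b c w : α} (ha : a ∈ V) (hb : b ∈ V) (hc : c ∈ V)
    (hab : a ≠ b) (hac : a ≠ c) (hbc : b ≠ c) (hwV : w ∈ V)
    (hw : w ∉ ({a, b, c} : Finset α)) :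
    Rel π V a b c ↔
      time (π {a, b, c, w}) a b < time (π {a, b, c, w}) a c := by
  simp only [Finset.mem_insert, Finset.mem_singleton, not_or] at hw
  obtain ⟨hwa, hwb, hwc⟩ := hw
  constructor
  · rintro ⟨w', hw'V, hw'3, h⟩
    simp only [Finset.mem_insert, Finset.mem_singleton, not_or] at hw'3
    obtain ⟨hw'a, hw'b, hw'c⟩ := hw'3
    by_cases hww' : w' = w
    · subst hww'; exact h
    set F : Finset α := {a, b, c, w'} with hFdef
    set F' : Finset α := {a, b, c, w} with hF'def
    have hFV : F ⊆ V := by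
      simp only [hFdef, Finset.insert_subset_iff, Finset.singleton_subset_iff]
      exact ⟨ha, hb, hc, hw'V⟩
    have hF'V : F' ⊆ V := by
      simp only [hF'def, Finset.insert_subset_iff, Finset.singleton_subset_iff]
      exact ⟨ha, hb, hc, hwV⟩
    have hF4 : F.card = 4 := card4 hab hac (Ne.symm hw'a) hbc (Ne.symm hw'b) (Ne.symm hw'c)
    have hF'4 : F'.card = 4 := card4 hab hac (Ne.symm hwa) hbc (Ne.symm hwb) (Ne.symm hwc)
    have hinter : F ∩ F' = {a, b, c} := by
      ext x
      simp only [hFdef, hF'def, Finset.mem_inter, Finset.mem_insert, Finset.mem_singleton]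
      constructor
      · rintro ⟨h1 | h1 | h1 | h1, h2 | h2 | h2 | h2⟩ <;> subst h1 <;> tauto
      · tauto
    have hinter3 : (F ∩ F').card = 3 := by rw [hinter]; exact card3 hab hac hbc
    obtain ⟨ρ, hρ, hρF, hρF'⟩ := hcomp F hFV F' hF'V hF4 hF'4 hinter3
    have haF : a ∈ F := by simp [hFdef]
    have hbF : b ∈ F := by simp [hFdef]
    have hcF : c ∈ F := by simp [hFdef]
    have haF' : a ∈ F' := by simp [hF'def]
    have hbF' : b ∈ F' := by simp [hF'def]
    have hcF' : c ∈ F' := by simp [hF'def]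
    have e1 := firstReturn_time_lt_iff (Finset.subset_union_left) hρ
      (hcyc F hFV hF4) hρF haF hbF hcF
    have e2 := firstReturn_time_lt_iff (Finset.subset_union_right) hρ
      (hcyc F' hF'V hF'4) hρF' haF' hbF' hcF'
    exact e2.mpr (e1.mp h)
  · intro h
    exact ⟨w, hwV, by simp [hwa, hwb, hwc], h⟩

include hV in
theorem rel_ofF {F : Finset α} (hFV : F ⊆ V) (hF4 : F.card = 4) {a b c : α}
    (ha : a ∈ F) (hb : b ∈ F) (hc : c ∈ F)
    (hab : a ≠ b) (hac : a ≠ c) (hbc : b ≠ c) :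
    Rel π V a b c ↔ time (π F) a b < time (π F) a c := by
  have hne : (V \ F).Nonempty := by
    rw [← Finset.card_pos, Finset.card_sdiff_of_subset hFV]; omega
  obtain ⟨w, hw⟩ := hne
  rw [Finset.mem_sdiff] at hw
  obtain ⟨hwV, hwF⟩ := hw
  have hwa : w ≠ a := fun h => hwF (h ▸ ha)
  have hwb : w ≠ b := fun h => hwF (h ▸ hb)
  have hwc : w ≠ c := fun h => hwF (h ▸ hc)
  set F' : Finset α := {a, b, c, w} with hF'def
  have hF'V : F' ⊆ V := by
    simp only [hF'def, Finset.insert_subset_iff, Finset.singleton_subset_iff]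
    exact ⟨hFV ha, hFV hb, hFV hc, hwV⟩
  have hF'4 : F'.card = 4 := card4 hab hac (Ne.symm hwa) hbc (Ne.symm hwb) (Ne.symm hwc)
  have hinter : F ∩ F' = {a, b, c} := by
    ext x
    simp only [hF'def, Finset.mem_inter, Finset.mem_insert, Finset.mem_singleton]
    constructor
    · rintro ⟨h1, h2 | h2 | h2 | h2⟩ <;> subst h2
      · tauto
      · tauto
      · tauto
      · exact absurd h1 hwF
    · rintro (h | h | h) <;> subst h <;> tauto
  have hinter3 : (F ∩ F').card = 3 := by rw [hinter]; exact card3 hab hac hbc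
  obtain ⟨ρ, hρ, hρF, hρF'⟩ := hcomp F hFV F' hF'V hF4 hF'4 hinter3
  have haF' : a ∈ F' := by simp [hF'def]
  have hbF' : b ∈ F' := by simp [hF'def]
  have hcF' : c ∈ F' := by simp [hF'def]
  have e1 := firstReturn_time_lt_iff (Finset.subset_union_left) hρ
    (hcyc F hFV hF4) hρF ha hb hc
  have e2 := firstReturn_time_lt_iff (Finset.subset_union_right) hρ
    (hcyc F' hF'V hF'4) hρF' haF' hbF' hcF'
  have e3 := rel_iff_time hcyc hcomp (hFV ha) (hFV hb) (hFV hc) hab hac hbc hwV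
    (by simp [hwa, hwb, hwc])
  rw [e3, ← hF'def]
  rw [e1, ← e2]

include hV

theorem rel_asymm {a b c : α} (ha : a ∈ V) (hb : b ∈ V) (hc : c ∈ V)
    (hab : a ≠ b) (hac : a ≠ c) (hbc : b ≠ c)
    (h1 : Rel π V a b c) (h2 : Rel π V a c b) : False := by
  have hne : (V \ ({a, b, c} : Finset α)).Nonempty := by
    rw [← Finset.card_pos, Finset.card_sdiff_of_subset]
    · rw [card3 hab hac hbc]; omega
    · simp only [Finset.insert_subset_iff, Finset.singleton_subset_iff]
      exact ⟨ha, hb, hc⟩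
  obtain ⟨w, hw⟩ := hne
  rw [Finset.mem_sdiff] at hw
  rw [rel_iff_time hcyc hcomp ha hb hc hab hac hbc hw.1 hw.2] at h1
  rw [rel_iff_time hcyc hcomp ha hc hb hac hab hbc.symm hw.1 (by
    simp only [Finset.mem_insert, Finset.mem_singleton, not_or] at hw ⊢
    tauto)] at h2
  rw [show ({a, c, b, w} : Finset α) = {a, b, c, w} from by ext x; simp; tauto] at h2
  omega

theorem rel_total {a b c : α} (ha : a ∈ V) (hb : b ∈ V) (hc : c ∈ V)
    (hab : a ≠ b) (hac : a ≠ c) (hbc : b ≠ c) :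
    Rel π V a b c ∨ Rel π V a c b := by
  have hne : (V \ ({a, b, c} : Finset α)).Nonempty := by
    rw [← Finset.card_pos, Finset.card_sdiff_of_subset]
    · rw [card3 hab hac hbc]; omega
    · simp only [Finset.insert_subset_iff, Finset.singleton_subset_iff]
      exact ⟨ha, hb, hc⟩
  obtain ⟨w, hw⟩ := hne
  rw [Finset.mem_sdiff] at hw
  simp only [Finset.mem_insert, Finset.mem_singleton, not_or] at hw
  obtain ⟨hwV, hwa, hwb, hwc⟩ := hw.imp id id
  set F : Finset α := {a, b, c, w} with hFdef
  have hFV : F ⊆ V := by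
    simp only [hFdef, Finset.insert_subset_iff, Finset.singleton_subset_iff]
    exact ⟨ha, hb, hc, hwV⟩
  have hF4 : F.card = 4 := card4 hab hac (Ne.symm hwa) hbc (Ne.symm hwb) (Ne.symm hwc)
  have haF : a ∈ F := by simp [hFdef]
  have hbF : b ∈ F := by simp [hFdef]
  have hcF : c ∈ F := by simp [hFdef]
  have hne2 := time_total (hcyc F hFV hF4) haF hbF hcF hbc
  rw [rel_ofF hV hcyc hcomp hFV hF4 haF hbF hcF hab hac hbc,
    rel_ofF hV hcyc hcomp hFV hF4 haF hcF hbF hac hab hbc.symm]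
  omega

theorem rel_rot {a b c : α} (ha : a ∈ V) (hb : b ∈ V) (hc : c ∈ V)
    (hab : a ≠ b) (hac : a ≠ c) (hbc : b ≠ c)
    (h : Rel π V a b c) : Rel π V b c a := by
  have hne : (V \ ({a, b, c} : Finset α)).Nonempty := by
    rw [← Finset.card_pos, Finset.card_sdiff_of_subset]
    · rw [card3 hab hac hbc]; omega
    · simp only [Finset.insert_subset_iff, Finset.singleton_subset_iff]
      exact ⟨ha, hb, hc⟩
  obtain ⟨w, hw⟩ := hne
  rw [Finset.mem_sdiff] at hw
  simp only [Finset.mem_insert, Finset.mem_singleton, not_or] at hw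
  obtain ⟨hwV, hwa, hwb, hwc⟩ := hw.imp id id
  set F : Finset α := {a, b, c, w} with hFdef
  have hFV : F ⊆ V := by
    simp only [hFdef, Finset.insert_subset_iff, Finset.singleton_subset_iff]
    exact ⟨ha, hb, hc, hwV⟩
  have hF4 : F.card = 4 := card4 hab hac (Ne.symm hwa) hbc (Ne.symm hwb) (Ne.symm hwc)
  have haF : a ∈ F := by simp [hFdef]
  have hbF : b ∈ F := by simp [hFdef]
  have hcF : c ∈ F := by simp [hFdef]
  rw [rel_ofF hV hcyc hcomp hFV hF4 haF hbF hcF hab hac hbc] at h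
  rw [rel_ofF hV hcyc hcomp hFV hF4 hbF hcF haF hbc hab.symm hac.symm]
  exact (time_rot (hcyc F hFV hF4) haF hbF hcF hab hac hbc).mp h

theorem rel_trans4 {v a b c : α} (hv : v ∈ V) (ha : a ∈ V) (hb : b ∈ V) (hc : c ∈ V)
    (hva : v ≠ a) (hvb : v ≠ b) (hvc : v ≠ c) (hab : a ≠ b) (hac : a ≠ c) (hbc : b ≠ c)
    (h1 : Rel π V v a b) (h2 : Rel π V v b c) : Rel π V a b c := by
  set F : Finset α := {v, a, b, c} with hFdef
  have hFV : F ⊆ V := by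
    simp only [hFdef, Finset.insert_subset_iff, Finset.singleton_subset_iff]
    exact ⟨hv, ha, hb, hc⟩
  have hF4 : F.card = 4 := card4 hva hvb hvc hab hac hbc
  have hvF : v ∈ F := by simp [hFdef]
  have haF : a ∈ F := by simp [hFdef]
  have hbF : b ∈ F := by simp [hFdef]
  have hcF : c ∈ F := by simp [hFdef]
  rw [rel_ofF hV hcyc hcomp hFV hF4 hvF haF hbF hva hvb hab] at h1
  rw [rel_ofF hV hcyc hcomp hFV hF4 hvF hbF hcF hvb hvc hbc] at h2
  rw [rel_ofF hV hcyc hcomp hFV hF4 haF hbF hcF hab hac hbc]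
  exact time_trans (hcyc F hFV hF4) hvF haF hbF hcF hva hvb hvc hab hac hbc h1 h2

theorem rel_trans3 {v a b c : α} (hv : v ∈ V) (ha : a ∈ V) (hb : b ∈ V) (hc : c ∈ V)
    (hva : v ≠ a) (hvb : v ≠ b) (hvc : v ≠ c) (hab : a ≠ b) (hac : a ≠ c) (hbc : b ≠ c)
    (h1 : Rel π V v a b) (h2 : Rel π V v b c) : Rel π V v a c := by
  set F : Finset α := {v, a, b, c} with hFdef
  have hFV : F ⊆ V := by
    simp only [hFdef, Finset.insert_subset_iff, Finset.singleton_subset_iff]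
    exact ⟨hv, ha, hb, hc⟩
  have hF4 : F.card = 4 := card4 hva hvb hvc hab hac hbc
  have hvF : v ∈ F := by simp [hFdef]
  have haF : a ∈ F := by simp [hFdef]
  have hbF : b ∈ F := by simp [hFdef]
  have hcF : c ∈ F := by simp [hFdef]
  rw [rel_ofF hV hcyc hcomp hFV hF4 hvF haF hbF hva hvb hab] at h1
  rw [rel_ofF hV hcyc hcomp hFV hF4 hvF hbF hcF hvb hvc hbc] at h2
  rw [rel_ofF hV hcyc hcomp hFV hF4 hvF haF hcF hva hvc hac]
  omega

end

end CycAux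

namespace CycAux

theorem cyc_pow_fix {α : Type*} {σ : Equiv.Perm α} {a : α} (h : σ a = a) (k : ℕ) :
    (σ ^ k) a = a := by
  induction k with
  | zero => simp
  | succ n ih => rw [pow_succ, Equiv.Perm.mul_apply, h, ih]

theorem main {α : Type*} [DecidableEq α] (V : Finset α) (hV : 5 ≤ V.card)
    (π : Finset α → Equiv.Perm α)
    (hcyc : ∀ F ⊆ V, F.card = 4 → IsCyclicArrangement F (π F))
    (hcomp : ∀ F, F ⊆ V → ∀ F', F' ⊆ V → F.card = 4 → F'.card = 4 →
      (F ∩ F').card = 3 → CyclicCompatible F F' (π F) (π F')) :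
    ∃ σ : Equiv.Perm α, IsCyclicArrangement V σ ∧
      ∀ F ⊆ V, F.card = 4 → IsFirstReturnMap σ F (π F) := by
  classical
  obtain ⟨v0, hv0⟩ := Finset.card_pos.mp (by omega : 0 < V.card)
  set W := V.erase v0 with hWdef
  set key : α → ℕ :=
    fun x => if x = v0 then 0 else 1 + (W.filter (fun y => Rel π V v0 y x)).card
    with hkeydef
  have hkey0 : key v0 = 0 := by simp [hkeydef]
  have hmemW : ∀ x, x ∈ W ↔ x ∈ V ∧ x ≠ v0 := by
    intro x; rw [hWdef, Finset.mem_erase]; tauto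
  -- strict monotonicity of key along Rel v0
  have f1 : ∀ a ∈ W, ∀ b ∈ W, a ≠ b → Rel π V v0 a b → key a < key b := by
    intro a ha b hb hab hrel
    obtain ⟨haV, hav0⟩ := (hmemW a).mp ha
    obtain ⟨hbV, hbv0⟩ := (hmemW b).mp hb
    have hsub : W.filter (fun y => Rel π V v0 y a) ⊆ W.filter (fun y => Rel π V v0 y b) := by
      intro y hy
      rw [Finset.mem_filter] at hy ⊢
      obtain ⟨hyW, hyrel⟩ := hy
      obtain ⟨hyV, hyv0⟩ := (hmemW y).mp hyW
      have hya : y ≠ a := fun h => rel_irrefl (h ▸ hyrel)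
      have hyb : y ≠ b := by
        intro h
        subst h
        exact rel_asymm hV hcyc hcomp hv0 haV hbV (Ne.symm hav0) (Ne.symm hbv0) hab
          hrel hyrel
      exact ⟨hyW, rel_trans3 hV hcyc hcomp hv0 hyV haV hbV (Ne.symm hyv0) (Ne.symm hav0)
        (Ne.symm hbv0) hya hyb hab hyrel hrel⟩
    have hss : W.filter (fun y => Rel π V v0 y a) ⊂ W.filter (fun y => Rel π V v0 y b) := by
      rw [Finset.ssubset_iff_of_subset hsub]
      refine ⟨a, ?_, ?_⟩
      · rw [Finset.mem_filter]; exact ⟨ha, hrel⟩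
      · rw [Finset.mem_filter]; rintro ⟨-, h⟩; exact rel_irrefl h
    have := Finset.card_lt_card hss
    simp only [hkeydef, if_neg hav0, if_neg hbv0]
    omega
  have f2 : ∀ a ∈ W, ∀ b ∈ W, a ≠ b → (key a < key b ↔ Rel π V v0 a b) := by
    intro a ha b hb hab
    constructor
    · intro h
      obtain ⟨haV, hav0⟩ := (hmemW a).mp ha
      obtain ⟨hbV, hbv0⟩ := (hmemW b).mp hb
      rcases rel_total hV hcyc hcomp hv0 haV hbV (Ne.symm hav0) (Ne.symm hbv0) hab with
        hr | hr
      · exact hr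
      · exact absurd (f1 b hb a ha hab.symm hr) (by omega)
    · exact f1 a ha b hb hab
  have keyinj : ∀ a ∈ V, ∀ b ∈ V, key a = key b → a = b := by
    intro a ha b hb hk
    by_contra hab
    by_cases hav0 : a = v0
    · subst hav0
      have hbW : b ∈ W := (hmemW b).mpr ⟨hb, fun h => hab h.symm⟩
      simp only [hkeydef, if_pos rfl, if_neg ((hmemW b).mp hbW).2] at hk
      omega
    · by_cases hbv0 : b = v0
      · subst hbv0
        simp only [hkeydef, if_pos rfl, if_neg hav0] at hk
        omega
      · have haW : a ∈ W := (hmemW a).mpr ⟨ha, hav0⟩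
        have hbW : b ∈ W := (hmemW b).mpr ⟨hb, hbv0⟩
        rcases rel_total hV hcyc hcomp hv0 ha hb (Ne.symm hav0) (Ne.symm hbv0) hab with
          hr | hr
        · exact absurd (f1 a haW b hbW hab hr) (by omega)
        · exact absurd (f1 b hbW a haW (Ne.symm hab) hr) (by omega)
  -- the sorted list
  set l : List α := V.toList.mergeSort (fun a b => decide (key a ≤ key b)) with hldef
  have hperm : l.Perm V.toList := List.mergeSort_perm _ _
  have hnodup : l.Nodup := hperm.nodup_iff.mpr (Finset.nodup_toList V)
  have hmem : ∀ x, x ∈ l ↔ x ∈ V := fun x => by rw [hperm.mem_iff, Finset.mem_toList]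
  have hlen : l.length = V.card := by rw [hperm.length_eq, Finset.length_toList]
  have hsorted : l.Pairwise (fun a b => decide (key a ≤ key b) = true) := by
    apply List.pairwise_mergeSort
    · intro a b c h1 h2
      simp only [decide_eq_true_eq] at h1 h2 ⊢
      omega
    · intro a b
      simp only [Bool.or_eq_true, decide_eq_true_eq]
      omega
  set n := l.length with hndef
  have hn5 : 5 ≤ n := by omega
  have hgetV : ∀ i (hi : i < n), l[i] ∈ V := fun i hi => (hmem _).mp (l.getElem_mem hi)
  have hkeymono : ∀ i j (hi : i < n) (hj : j < n), i < j → key l[i] < key l[j] := by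
    intro i j hi hj hij
    have hle := List.pairwise_iff_getElem.mp hsorted i j hi hj hij
    simp only [decide_eq_true_eq] at hle
    have hne : l[i] ≠ l[j] := fun h => absurd ((hnodup.getElem_inj_iff).mp h) (by omega)
    exact lt_of_le_of_ne hle (fun h => hne (keyinj _ (hgetV i hi) _ (hgetV j hj) h))
  have hgetinj : ∀ i j (hi : i < n) (hj : j < n), l[i] = l[j] → i = j := by
    intro i j hi hj h
    exact (hnodup.getElem_inj_iff).mp h
  have hl0 : ∀ (h0 : 0 < n), l[0]'h0 = v0 := by
    intro h0
    obtain ⟨i, hi, hgi⟩ := List.mem_iff_getElem.mp ((hmem v0).mpr hv0)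
    rcases Nat.eq_zero_or_pos i with h | h
    · subst h; exact hgi
    · exfalso
      have := hkeymono 0 i h0 hi h
      rw [hgi, hkey0] at this
      omega
  set σ : Equiv.Perm α := l.formPerm with hσdef
  have hσpow : ∀ (m i : ℕ) (hi : i < n),
      (σ ^ m) l[i] = l[(i + m) % n]'(Nat.mod_lt _ (by omega)) := by
    intro m i hi
    exact List.formPerm_pow_apply_getElem l hnodup m i hi
  have hσcyc : IsCyclicArrangement V σ := by
    constructor
    · intro x hx
      exact List.formPerm_apply_of_notMem (fun h => hx ((hmem x).mp h))
    · intro a ha b hb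
      obtain ⟨i, hi, hgi⟩ := List.mem_iff_getElem.mp ((hmem a).mpr ha)
      obtain ⟨j, hj, hgj⟩ := List.mem_iff_getElem.mp ((hmem b).mpr hb)
      refine ⟨n - i + j, ?_⟩
      rw [← hgi, hσpow (n - i + j) i hi]
      have harith : (i + (n - i + j)) % n = j := by
        have : i + (n - i + j) = n + j := by omega
        rw [this, Nat.add_mod_left, Nat.mod_eq_of_lt hj]
      rw [← hgj]
      congr 1
  -- explicit first-arrival times
  have htime : ∀ i j (hi : i < n) (hj : j < n), i ≠ j →
      time σ l[i] l[j] = if i < j then j - i else n + j - i := by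
    intro i j hi hj hij
    set m0 := if i < j then j - i else n + j - i with hm0def
    have hm0lt : m0 < n := by rw [hm0def]; split <;> omega
    have hm0pos : 0 < m0 := by rw [hm0def]; split <;> omega
    have hspec : (σ ^ m0) l[i] = l[j] := by
      rw [hσpow m0 i hi]
      have harith : (i + m0) % n = j := by
        rw [hm0def]
        split
        · rw [show i + (j - i) = j by omega, Nat.mod_eq_of_lt hj]
        · rw [show i + (n + j - i) = n + j by omega, Nat.add_mod_left, Nat.mod_eq_of_lt hj]
      congr 1
    apply le_antisymm (time_le hspec)
    by_contra hlt
    push_neg at hlt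
    set t := time σ l[i] l[j] with htdef
    have ht : (σ ^ t) l[i] = l[j] :=
      time_spec (hσcyc.2 _ (hgetV i hi) _ (hgetV j hj))
    rw [hσpow t i hi] at ht
    have hmod : (i + t) % n = j := hgetinj _ _ _ _ ht
    have h2n : i + t < 2 * n := by omega
    rcases Nat.lt_or_ge (i + t) n with h | h
    · rw [Nat.mod_eq_of_lt h] at hmod
      rw [hm0def] at hlt
      split at hlt <;> omega
    · have : (i + t) % n = i + t - n := by
        rw [Nat.mod_eq_sub_mod h, Nat.mod_eq_of_lt (by omega)]
      rw [this] at hmod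
      rw [hm0def] at hlt
      split at hlt <;> omega
  -- the constructed cycle realizes Rel on sorted triples of indices
  have relIdx : ∀ p q r (hp : p < q) (hq : q < r) (hr : r < n),
      Rel π V (l[p]'(by omega)) (l[q]'(by omega)) (l[r]'(by omega)) := by
    intro p q r hp hq hr
    have hpn : p < n := by omega
    have hqn : q < n := by omega
    have hqW : l[q] ∈ W := by
      rw [hmemW]
      refine ⟨hgetV q hqn, fun h => ?_⟩
      have := hgetinj q 0 hqn (by omega) (by rw [h, hl0 (by omega)])
      omega
    have hrW : l[r] ∈ W := by
      rw [hmemW]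
      refine ⟨hgetV r hr, fun h => ?_⟩
      have := hgetinj r 0 hr (by omega) (by rw [h, hl0 (by omega)])
      omega
    have hqr : l[q] ≠ l[r] := fun h => by have := hgetinj q r hqn hr h; omega
    have hrelqr : Rel π V v0 l[q] l[r] :=
      (f2 _ hqW _ hrW hqr).mp (hkeymono q r hqn hr hq)
    rcases Nat.eq_zero_or_pos p with h0 | h0
    · subst h0
      rw [hl0 hpn]
      exact hrelqr
    · have hpW : l[p] ∈ W := by
        rw [hmemW]
        refine ⟨hgetV p hpn, fun h => ?_⟩
        have := hgetinj p 0 hpn (by omega) (by rw [h, hl0 (by omega)])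
        omega
      have hpq : l[p] ≠ l[q] := fun h => by have := hgetinj p q hpn hqn h; omega
      have hpr : l[p] ≠ l[r] := fun h => by have := hgetinj p r hpn hr h; omega
      have hrelpq : Rel π V v0 l[p] l[q] :=
        (f2 _ hpW _ hqW hpq).mp (hkeymono p q hpn hqn hp)
      obtain ⟨hpv, hpv0⟩ := (hmemW _).mp hpW
      obtain ⟨hqv, hqv0⟩ := (hmemW _).mp hqW
      obtain ⟨hrv, hrv0⟩ := (hmemW _).mp hrW
      exact rel_trans4 hV hcyc hcomp hv0 hpv hqv hrv (Ne.symm hpv0) (Ne.symm hqv0)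
        (Ne.symm hrv0) hpq hpr hqr hrelpq hrelqr
  -- Lemma D
  have relD : ∀ a b c, a ∈ V → b ∈ V → c ∈ V → a ≠ b → a ≠ c → b ≠ c →
      (time σ a b < time σ a c ↔ Rel π V a b c) := by
    intro a b c ha hb hc hab hac hbc
    obtain ⟨i, hi, hgi⟩ := List.mem_iff_getElem.mp ((hmem a).mpr ha)
    obtain ⟨j, hj, hgj⟩ := List.mem_iff_getElem.mp ((hmem b).mpr hb)
    obtain ⟨k, hk, hgk⟩ := List.mem_iff_getElem.mp ((hmem c).mpr hc)
    subst hgi; subst hgj; subst hgk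
    have hij : i ≠ j := fun h => hab (by congr 1)
    have hik : i ≠ k := fun h => hac (by congr 1)
    have hjk : j ≠ k := fun h => hbc (by congr 1)
    rw [htime i j hi hj hij, htime i k hi hk hik]
    have hasym := fun h1 h2 => rel_asymm hV hcyc hcomp (hgetV i hi) (hgetV j hj)
      (hgetV k hk) hab hac hbc h1 h2
    have hrot : ∀ x y z, x ∈ V → y ∈ V → z ∈ V → x ≠ y → x ≠ z → y ≠ z →
        Rel π V x y z → Rel π V y z x := fun x y z hx hy hz h1 h2 h3 h =>
      rel_rot hV hcyc hcomp hx hy hz h1 h2 h3 h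
    rcases lt_trichotomy i j with h1 | h1 | h1
    · rcases lt_trichotomy j k with h2 | h2 | h2
      · -- i < j < k
        exact iff_of_true (by split_ifs <;> omega) (relIdx i j k h1 h2 hk)
      · omega
      · rcases lt_trichotomy i k with h3 | h3 | h3
        · -- i < k < j
          have hrel := relIdx i k j h3 h2 hj
          exact iff_of_false (by split_ifs <;> omega) (fun h => hasym h hrel)
        · omega
        · -- k < i < j
          have hrel := relIdx k i j h3 h1 hj
          have := hrot _ _ _ (hgetV k hk) (hgetV i hi) (hgetV j hj)
            (Ne.symm hac) hbc.symm hab hrel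
          exact iff_of_true (by split_ifs <;> omega) this
    · omega
    · rcases lt_trichotomy i k with h2 | h2 | h2
      · -- j < i < k
        have hrel := relIdx j i k h1 h2 hk
        have := hrot _ _ _ (hgetV j hj) (hgetV i hi) (hgetV k hk)
          hab.symm hbc hac hrel
        exact iff_of_false (by split_ifs <;> omega) (fun h => hasym h this)
      · omega
      · rcases lt_trichotomy j k with h3 | h3 | h3
        · -- j < k < i
          have hrel := relIdx j k i h3 h2 hi
          have s1 := hrot _ _ _ (hgetV j hj) (hgetV k hk) (hgetV i hi)
            hbc hab.symm hac.symm hrel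
          have s2 := hrot _ _ _ (hgetV k hk) (hgetV i hi) (hgetV j hj)
            (Ne.symm hac) hbc.symm hab s1
          exact iff_of_true (by split_ifs <;> omega) s2
        · omega
        · -- k < j < i
          have hrel := relIdx k j i h3 h1 hi
          have s1 := hrot _ _ _ (hgetV k hk) (hgetV j hj) (hgetV i hi)
            (Ne.symm hbc) (Ne.symm hac) hab.symm hrel
          have s2 := hrot _ _ _ (hgetV j hj) (hgetV i hi) (hgetV k hk)
            hab.symm hbc hac s1
          exact iff_of_false (by split_ifs <;> omega) (fun h => hasym h s2)
  -- final assembly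
  refine ⟨σ, hσcyc, ?_⟩
  intro F hFV hF4
  constructor
  · exact (hcyc F hFV hF4).1
  · intro a haF
    have haV : a ∈ V := hFV haF
    have hbne : (F.erase a).Nonempty := by
      rw [← Finset.card_pos, Finset.card_erase_of_mem haF]; omega
    obtain ⟨b0, hb0⟩ := hbne
    rw [Finset.mem_erase] at hb0
    obtain ⟨hb0a, hb0F⟩ := hb0
    have hhits0 : ∃ m : ℕ, (σ ^ m) a = b0 := hσcyc.2 a haV b0 (hFV hb0F)
    have hhit : ∃ m : ℕ, 0 < m ∧ (σ ^ m) a ∈ F := by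
      refine ⟨time σ a b0, time_pos (Ne.symm hb0a) hhits0, ?_⟩
      rw [time_spec hhits0]; exact hb0F
    set m := Nat.find hhit with hmdef
    obtain ⟨hmpos, hmF⟩ := Nat.find_spec hhit
    refine ⟨m, hmpos, hmF, fun j hj hjm hjF => Nat.find_min hhit hjm ⟨hj, hjF⟩, ?_⟩
    set b := (σ ^ m) a with hbdef
    have hba : b ≠ a := by
      intro hbeq
      set t0 := time σ a b0 with ht0def
      have ht0pos : 0 < t0 := time_pos (Ne.symm hb0a) hhits0
      have hspec0 : (σ ^ t0) a = b0 := time_spec hhits0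
      have hmt0 : m ≤ t0 := Nat.find_le ⟨ht0pos, by rw [hspec0]; exact hb0F⟩
      have : (σ ^ (t0 - m)) a = b0 := by
        rw [← hbeq, hbdef, ← Equiv.Perm.mul_apply, ← pow_add,
          show t0 - m + m = t0 by omega, hspec0]
      have := time_le this
      omega
    have htimeb : time σ a b = m := by
      apply le_antisymm (time_le hbdef.symm)
      have hspec : (σ ^ time σ a b) a = b := time_spec (hσcyc.2 a haV b (hFV hmF))
      exact Nat.find_le ⟨time_pos (Ne.symm hba) (hσcyc.2 a haV b (hFV hmF)),
        by rw [hspec]; exact hmF⟩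
    have hmin : ∀ c ∈ F, c ≠ a → c ≠ b → time σ a b < time σ a c := by
      intro c hcF hca hcb
      have hhitsc : ∃ m' : ℕ, (σ ^ m') a = c := hσcyc.2 a haV c (hFV hcF)
      have hspec : (σ ^ time σ a c) a = c := time_spec hhitsc
      have h1 : m ≤ time σ a c :=
        Nat.find_le ⟨time_pos (Ne.symm hca) hhitsc, by rw [hspec]; exact hcF⟩
      have h2 : time σ a c ≠ m := by
        intro h
        apply hcb
        rw [← hspec, h, hbdef]
      omega
    -- the given 4-cycle's next element
    set b' := π F a with hb'def
    have hπcyc := hcyc F hFV hF4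
    have hb'F : b' ∈ F := cyc_mem hπcyc haF
    have hb'a : b' ≠ a := by
      intro h
      obtain ⟨k, hk⟩ := hπcyc.2 a haF b0 hb0F
      rw [cyc_pow_fix (hb'def ▸ h) k] at hk
      exact hb0a hk.symm
    have claim2 : ∀ c ∈ F, c ≠ a → c ≠ b' → Rel π V a b' c := by
      intro c hcF hca hcb'
      rw [rel_ofF hV hcyc hcomp hFV hF4 haF hb'F hcF (Ne.symm hb'a) (Ne.symm hca)
        (Ne.symm hcb')]
      have hhitsb' : ∃ k : ℕ, ((π F) ^ k) a = b' := hπcyc.2 a haF b' hb'F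
      have hhitsc : ∃ k : ℕ, ((π F) ^ k) a = c := hπcyc.2 a haF c hcF
      have h1 : time (π F) a b' ≤ 1 := time_le (by rw [pow_one, hb'def])
      have h2 : 0 < time (π F) a b' := time_pos (Ne.symm hb'a) hhitsb'
      have h3 : 0 < time (π F) a c := time_pos (Ne.symm hca) hhitsc
      have h4 : time (π F) a b' ≠ time (π F) a c :=
        time_total hπcyc haF hb'F hcF (fun h => hcb' h.symm)
      omega
    by_cases hbb' : b = b'
    · exact hbb'.symm
    · exfalso
      have hrel1 : Rel π V a b b' :=
        (relD a b b' haV (hFV hmF) (hFV hb'F) (Ne.symm hba) (Ne.symm hb'a)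
          hbb').mp (hmin b' hb'F hb'a (fun h => hbb' h.symm))
      have hrel2 : Rel π V a b' b := claim2 b hmF hba hbb'
      exact rel_asymm hV hcyc hcomp haV (hFV hmF) (hFV hb'F) (Ne.symm hba)
        (Ne.symm hb'a) hbb' hrel1 hrel2

end CycAux

/-- If cyclic arrangements are given on all 4-element subsets of a finite set `V`
with `|V| ≥ 5`, pairwise compatible whenever the subsets share 3 elements, then
there is a cyclic arrangement of `V` whose first-return map on every 4-element
subset `F` is `π F`. -/
theorem stmt4 {α : Type*} [DecidableEq α] (V : Finset α) (hV : 5 ≤ V.card)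
    (π : Finset α → Equiv.Perm α)
    (hcyc : ∀ F ⊆ V, F.card = 4 → IsCyclicArrangement F (π F))
    (hcomp : ∀ F, F ⊆ V → ∀ F', F' ⊆ V → F.card = 4 → F'.card = 4 →
      (F ∩ F').card = 3 → CyclicCompatible F F' (π F) (π F')) :
    ∃ σ : Equiv.Perm α, IsCyclicArrangement V σ ∧
      ∀ F ⊆ V, F.card = 4 → IsFirstReturnMap σ F (π F) := by
  exact CycAux.main V hV π hcyc hcomp
end

section
/- Let C be a finite set with |C| ≥ 3 and let a, b be two distinct elements not in C. Let π be a cyclic arrangement of C, let σ be a cyclic arrangement of C ∪ {a} whose first-return map on C equals π, and let τ be a cyclic arrangement of C ∪ {b} whose first-return map on C equals π. Then σ and τ are compatible. -/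
lemma cyc_mapsTo {α : Type*} {S : Finset α} {σ : Equiv.Perm α}
    (h : IsCyclicArrangement S σ) {x : α} (hx : x ∈ S) : σ x ∈ S := by
  by_contra hc
  have h1 : σ (σ x) = σ x := h.1 _ hc
  have h2 : σ x = x := σ.injective h1
  rw [h2] at hc; exact hc hx

lemma cyc_pow_mapsTo {α : Type*} {S : Finset α} {σ : Equiv.Perm α}
    (h : IsCyclicArrangement S σ) {x : α} (hx : x ∈ S) (n : ℕ) : (σ ^ n) x ∈ S := by
  induction n with
  | zero => simpa using hx
  | succ n ih => rw [pow_succ', Equiv.Perm.mul_apply]; exact cyc_mapsTo h ih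

lemma cyc_ne_self {α : Type*} {S : Finset α} {σ : Equiv.Perm α}
    (h : IsCyclicArrangement S σ) (hcard : 1 < S.card) {x : α} (hx : x ∈ S) :
    σ x ≠ x := by
  intro hfix
  obtain ⟨y, hy, hxy⟩ := Finset.exists_mem_ne hcard x
  obtain ⟨m, hm⟩ := h.2 x hx y hy
  have hall : ∀ n : ℕ, (σ ^ n) x = x := by
    intro n; induction n with
    | zero => rfl
    | succ n ih => rw [pow_succ, Equiv.Perm.mul_apply, hfix, ih]
  rw [hall m] at hm; exact hxy hm.symm

lemma firstreturn_one {α : Type*} {ρ : Equiv.Perm α} {A : Finset α} {π : Equiv.Perm α}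
    (h : IsFirstReturnMap ρ A π) {x : α} (hx : x ∈ A) (hρx : ρ x ∈ A) :
    π x = ρ x := by
  obtain ⟨m, hm, hmem, hj, heq⟩ := h.2 x hx
  rcases Nat.lt_or_ge m 2 with h2 | h2
  · interval_cases m
    simpa using heq
  · exact absurd (by simpa using hρx) (hj 1 one_pos (by omega))

lemma firstreturn_two {α : Type*} {ρ : Equiv.Perm α} {A : Finset α} {π : Equiv.Perm α}
    (h : IsFirstReturnMap ρ A π) {x : α} (hx : x ∈ A) (h1 : ρ x ∉ A)
    (h2 : ρ (ρ x) ∈ A) : π x = ρ (ρ x) := by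
  obtain ⟨m, hm, hmem, hj, heq⟩ := h.2 x hx
  rcases Nat.lt_or_ge m 3 with h3 | h3
  · interval_cases m
    · exact absurd (by simpa using hmem) h1
    · rw [heq, pow_succ, pow_one, Equiv.Perm.mul_apply]
  · refine absurd ?_ (hj 2 two_pos (by omega))
    rw [pow_succ, pow_one, Equiv.Perm.mul_apply]; exact h2

/-- If `σ` is a cyclic arrangement of `C ∪ {a}` and `τ` one of `C ∪ {b}` (with
`a ≠ b`, `a, b ∉ C`, `|C| ≥ 3`) whose first-return maps on `C` are both equal to a
common cyclic arrangement `π` of `C`, then `σ` and `τ` are compatible. -/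
theorem stmt5 {α : Type*} [DecidableEq α] (C : Finset α) (hC : 3 ≤ C.card)
    (a b : α) (hab : a ≠ b) (ha : a ∉ C) (hb : b ∉ C)
    (π σ τ : Equiv.Perm α)
    (hπ : IsCyclicArrangement C π)
    (hσ : IsCyclicArrangement (insert a C) σ)
    (hσπ : IsFirstReturnMap σ C π)
    (hτ : IsCyclicArrangement (insert b C) τ)
    (hτπ : IsFirstReturnMap τ C π) :
    CyclicCompatible (insert a C) (insert b C) σ τ := by
  -- basic membership facts
  have haA : a ∈ insert a C := Finset.mem_insert_self a C
  have hbB : b ∈ insert b C := Finset.mem_insert_self b C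
  have hbA : b ∉ insert a C := by
    simp only [Finset.mem_insert]; push_neg; exact ⟨hab.symm, hb⟩
  have haB : a ∉ insert b C := by
    simp only [Finset.mem_insert]; push_neg; exact ⟨hab, ha⟩
  have hcardA : 1 < (insert a C).card := by
    rw [Finset.card_insert_of_notMem ha]; omega
  have hcardB : 1 < (insert b C).card := by
    rw [Finset.card_insert_of_notMem hb]; omega
  -- the insertion points
  set d : α := τ.symm b with hd_def
  set c : α := σ.symm a with hc_def
  have hτd : τ d = b := τ.apply_symm_apply b
  have hσc : σ c = a := σ.apply_symm_apply a
  have hdC : d ∈ C := by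
    have hdb : d ≠ b := by
      intro h; rw [h] at hτd; exact cyc_ne_self hτ hcardB hbB hτd
    have : d ∈ insert b C := by
      by_contra h
      exact hdb (hτd ▸ (hτ.1 d h)).symm
    exact (Finset.mem_insert.mp this).resolve_left hdb
  have hcC : c ∈ C := by
    have hca : c ≠ a := by
      intro h; rw [h] at hσc; exact cyc_ne_self hσ hcardA haA hσc
    have : c ∈ insert a C := by
      by_contra h
      exact hca (hσc ▸ (hσ.1 c h)).symm
    exact (Finset.mem_insert.mp this).resolve_left hca
  have hdA : d ∈ insert a C := Finset.mem_insert_of_mem hdC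
  have hcB : c ∈ insert b C := Finset.mem_insert_of_mem hcC
  -- τ maps C \ {d} into C, and agrees with π there
  have hτmem : ∀ x ∈ C, x ≠ d → τ x ∈ C := by
    intro x hx hxd
    have h1 : τ x ∈ insert b C := cyc_mapsTo hτ (Finset.mem_insert_of_mem hx)
    have h2 : τ x ≠ b := fun h => hxd (τ.injective (h.trans hτd.symm))
    exact (Finset.mem_insert.mp h1).resolve_left h2
  have hτπ' : ∀ x ∈ C, x ≠ d → τ x = π x := by
    intro x hx hxd
    exact (firstreturn_one hτπ hx (hτmem x hx hxd)).symm
  -- σ maps C \ {c} into C, and agrees with π there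
  have hσmem : ∀ x ∈ C, x ≠ c → σ x ∈ C := by
    intro x hx hxc
    have h1 : σ x ∈ insert a C := cyc_mapsTo hσ (Finset.mem_insert_of_mem hx)
    have h2 : σ x ≠ a := fun h => hxc (σ.injective (h.trans hσc.symm))
    exact (Finset.mem_insert.mp h1).resolve_left h2
  have hσπ' : ∀ x ∈ C, x ≠ c → σ x = π x := by
    intro x hx hxc
    exact (firstreturn_one hσπ hx (hσmem x hx hxc)).symm
  -- π c = σ a
  have hσaC : σ a ∈ C := by
    have h1 : σ a ∈ insert a C := cyc_mapsTo hσ haA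
    exact (Finset.mem_insert.mp h1).resolve_left (cyc_ne_self hσ hcardA haA)
  have hπc : π c = σ a := by
    have := firstreturn_two hσπ hcC (by rw [hσc]; exact ha) (by rw [hσc]; exact hσaC)
    rwa [hσc] at this
  -- π d = τ b
  have hτbC : τ b ∈ C := by
    have h1 : τ b ∈ insert b C := cyc_mapsTo hτ hbB
    exact (Finset.mem_insert.mp h1).resolve_left (cyc_ne_self hτ hcardB hbB)
  have hπd : π d = τ b := by
    have := firstreturn_two hτπ hdC (by rw [hτd]; exact hb) (by rw [hτd]; exact hτbC)
    rwa [hτd] at this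
  -- the combined permutation
  set ρ : Equiv.Perm α := σ * Equiv.swap d b with hρ_def
  have hρd : ρ d = b := by
    have : ρ d = σ b := by
      simp [hρ_def, Equiv.swap_apply_left]
    rw [this, hσ.1 b hbA]
  have hρb : ρ b = σ d := by
    simp [hρ_def, Equiv.swap_apply_right]
  have hρx : ∀ x, x ≠ d → x ≠ b → ρ x = σ x := by
    intro x h1 h2
    simp [hρ_def, Equiv.swap_apply_of_ne_of_ne h1 h2]
  have hstep : ∀ (m : ℕ) (x : α), (ρ ^ (m + 1)) x = ρ ((ρ ^ m) x) := by
    intro m x; rw [pow_succ', Equiv.Perm.mul_apply]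
  have hρ2 : ∀ x : α, (ρ ^ 2) x = ρ (ρ x) := by
    intro x; rw [pow_succ, pow_one, Equiv.Perm.mul_apply]
  have hcyc : IsCyclicArrangement (insert a C ∪ insert b C) ρ := by
    constructor
    · intro x hx
      have hxd : x ≠ d := by rintro rfl; exact hx (Finset.mem_union_left _ hdA)
      have hxb : x ≠ b := by
        rintro rfl; exact hx (Finset.mem_union_right _ hbB)
      have hxA : x ∉ insert a C := fun h => hx (Finset.mem_union_left _ h)
      rw [hρx x hxd hxb, hσ.1 x hxA]
    · -- reachability
      have key : ∀ n : ℕ, ∀ x ∈ insert a C, ∃ m : ℕ, (ρ ^ m) x = (σ ^ n) x := by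
        intro n
        induction n with
        | zero => intro x _; exact ⟨0, rfl⟩
        | succ n ih =>
          intro x hx
          obtain ⟨m, hm⟩ := ih x hx
          have hxn : (σ ^ n) x ∈ insert a C := cyc_pow_mapsTo hσ hx n
          have hσstep : (σ ^ (n + 1)) x = σ ((σ ^ n) x) := by
            rw [pow_succ', Equiv.Perm.mul_apply]
          by_cases hdn : (σ ^ n) x = d
          · refine ⟨m + 2, ?_⟩
            have : m + 2 = (m + 1) + 1 := rfl
            rw [this, hstep, hstep, hm, hdn, hρd, hρb, hσstep, hdn]
          · refine ⟨m + 1, ?_⟩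
            have hbn : (σ ^ n) x ≠ b := fun h => hbA (h ▸ hxn)
            rw [hstep, hm, hρx _ hdn hbn, hσstep]
      have reach : ∀ x ∈ insert a C, ∀ y ∈ insert a C, ∃ m : ℕ, (ρ ^ m) x = y := by
        intro x hx y hy
        obtain ⟨n, hn⟩ := hσ.2 x hx y hy
        obtain ⟨m, hm⟩ := key n x hx
        exact ⟨m, hm.trans hn⟩
      have reachb : ∀ x ∈ insert a C, ∃ m : ℕ, (ρ ^ m) x = b := by
        intro x hx
        obtain ⟨m, hm⟩ := reach x hx d hdA
        exact ⟨m + 1, by rw [hstep, hm, hρd]⟩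
      intro x hx y hy
      rw [Finset.mem_union] at hx hy
      have hx' : x = b ∨ x ∈ insert a C := by
        rcases hx with hx | hx
        · exact Or.inr hx
        · rcases Finset.mem_insert.mp hx with h | h
          · exact Or.inl h
          · exact Or.inr (Finset.mem_insert_of_mem h)
      have hy' : y = b ∨ y ∈ insert a C := by
        rcases hy with hy | hy
        · exact Or.inr hy
        · rcases Finset.mem_insert.mp hy with h | h
          · exact Or.inl h
          · exact Or.inr (Finset.mem_insert_of_mem h)
      have hσdA : σ d ∈ insert a C := cyc_mapsTo hσ hdA
      rcases hx' with rfl | hxA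
      · rcases hy' with rfl | hyA
        · exact ⟨0, rfl⟩
        · obtain ⟨m, hm⟩ := reach (σ d) hσdA y hyA
          refine ⟨m + 1, ?_⟩
          rw [pow_succ, Equiv.Perm.mul_apply, hρb, hm]
      · rcases hy' with rfl | hyA
        · exact reachb x hxA
        · exact reach x hxA y hyA
  have hfrA : IsFirstReturnMap ρ (insert a C) σ := by
    refine ⟨hσ.1, ?_⟩
    intro x hx
    by_cases hxd : x = d
    · subst hxd
      refine ⟨2, two_pos, ?_, ?_, ?_⟩
      · rw [hρ2, hρd, hρb]; exact cyc_mapsTo hσ hdA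
      · intro j hj1 hj2
        have : j = 1 := by omega
        subst this
        rw [pow_one, hρd]; exact hbA
      · rw [hρ2, hρd, hρb]
    · have hxb : x ≠ b := fun h => hbA (h ▸ hx)
      refine ⟨1, one_pos, ?_, ?_, ?_⟩
      · rw [pow_one, hρx x hxd hxb]; exact cyc_mapsTo hσ hx
      · intro j hj1 hj2; omega
      · rw [pow_one, hρx x hxd hxb]
  have hfrB : IsFirstReturnMap ρ (insert b C) τ := by
    refine ⟨hτ.1, ?_⟩
    intro x hx
    rcases Finset.mem_insert.mp hx with hxb2 | hxC
    · -- x = b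
      subst hxb2
      by_cases hdc : d = c
      · refine ⟨2, two_pos, ?_, ?_, ?_⟩
        · rw [hρ2, hρb, hdc, hσc,
            hρx a (fun h => ha (h ▸ hdC)) hab, ← hπc, ← hdc, hπd]
          exact Finset.mem_insert_of_mem hτbC
        · intro j hj1 hj2
          have : j = 1 := by omega
          subst this
          rw [pow_one, hρb, hdc, hσc]; exact haB
        · rw [hρ2, hρb, hdc, hσc, hρx a (fun h => ha (h ▸ hdC)) hab,
            ← hπc, ← hdc, hπd]
      · refine ⟨1, one_pos, ?_, ?_, ?_⟩
        · rw [pow_one, hρb, hσπ' d hdC hdc, hπd]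
          exact Finset.mem_insert_of_mem hτbC
        · intro j hj1 hj2; omega
        · rw [pow_one, hρb, hσπ' d hdC hdc, hπd]
    · -- x ∈ C
      by_cases hxd : x = d
      · subst hxd
        refine ⟨1, one_pos, ?_, ?_, ?_⟩
        · rw [pow_one, hρd]; exact hbB
        · intro j hj1 hj2; omega
        · rw [pow_one, hρd, hτd]
      · have hxb : x ≠ b := fun h => hb (h ▸ hxC)
        by_cases hxc : x = c
        · subst hxc
          have hcd : c ≠ d := fun h => hxd h
          refine ⟨2, two_pos, ?_, ?_, ?_⟩
          · rw [hρ2, hρx c hxd hxb, hσc, hρx a (fun h => ha (h ▸ hdC)) hab,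
              ← hπc, ← hτπ' c hcC hcd]
            exact Finset.mem_insert_of_mem (hτmem c hcC hcd)
          · intro j hj1 hj2
            have : j = 1 := by omega
            subst this
            rw [pow_one, hρx c hxd hxb, hσc]; exact haB
          · rw [hρ2, hρx c hxd hxb, hσc, hρx a (fun h => ha (h ▸ hdC)) hab,
              ← hπc, ← hτπ' c hcC hcd]
        · refine ⟨1, one_pos, ?_, ?_, ?_⟩
          · rw [pow_one, hρx x hxd hxb, hσπ' x hxC hxc, ← hτπ' x hxC hxd]
            exact Finset.mem_insert_of_mem (hτmem x hxC hxd)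
          · intro j hj1 hj2; omega
          · rw [pow_one, hρx x hxd hxb, hσπ' x hxC hxc, hτπ' x hxC hxd]
  exact ⟨ρ, hcyc, hfrA, hfrB⟩
end

section
/- Let V be a finite vertex set and let H be a simple graph on V such that for any three distinct vertices u, v, w ∈ V, the number of edges of H among the three pairs {u,v}, {v,w}, {u,w} is even. Then there exists a subset A ⊆ V such that H has an edge between u and v if and only if exactly one of u, v belongs to A; that is, H is a complete bipartite graph with parts A and V ∖ A (possibly with an empty part, i.e., H may be empty). -/
/-- A graph in which every triple of distinct vertices spans an even number of edges
is complete bipartite (possibly with an empty part). -/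
theorem stmt6 {V : Type*} [Fintype V] (H : SimpleGraph V) [DecidableRel H.Adj]
    (h : ∀ u v w : V, u ≠ v → v ≠ w → u ≠ w →
      Even ((if H.Adj u v then 1 else 0) + (if H.Adj v w then 1 else 0) +
        (if H.Adj u w then 1 else 0) : ℕ)) :
    ∃ A : Set V, ∀ u v : V, H.Adj u v ↔ (u ∈ A ↔ v ∉ A) := by
  by_cases hV : Nonempty V
  · obtain ⟨x⟩ := hV
    refine ⟨{v | H.Adj x v}, fun u v => ?_⟩
    simp only [Set.mem_setOf_eq]
    by_cases hu : u = x
    · subst hu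
      simp [H.irrefl]
    · by_cases hv : v = x
      · subst hv
        simp [H.irrefl, H.adj_comm]
      · by_cases huv : u = v
        · subst huv
          simp [H.irrefl]
        · have := h x u v (Ne.symm hu) huv (Ne.symm hv)
          by_cases h1 : H.Adj x u <;> by_cases h2 : H.Adj u v <;>
            by_cases h3 : H.Adj x v <;>
            simp_all [Nat.even_iff]
  · exact ⟨∅, fun u v => absurd ⟨u⟩ hV⟩
end

section
/- Let n be a natural number and let x ∈ V be a vector having both the K₅-property and the 2K₃-property. Suppose that x({e,f}) = 0 for every pair {e,f} ∈ P such that 0 ∈ e or 0 ∈ f. Then for every i with 2 ≤ i ≤ n−1, the set E_i of edges f with {{1,i}, f} ∈ P and x({{1,i}, f}) = 1 consists of edges with both endpoints in {2,…,n−1} ∖ {i}, and E_i forms a complete bipartite graph on the vertex set {2,…,n−1} ∖ {i}: there exists a subset A ⊆ {2,…,n−1} ∖ {i} such that an edge {u,w} with u, w ∈ {2,…,n−1} ∖ {i} belongs to E_i if and only if exactly one of u, w lies in A (the case E_i = ∅ being included). -/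
set_option maxHeartbeats 1600000


open scoped Classical

/-- The set `P` of unordered pairs of independent edges of `Kₙ`: pairs `{e, f}`
where `e, f` are disjoint 2-element subsets of `Fin n`. -/
def ATP (n : ℕ) : Set (Sym2 (Finset (Fin n))) :=
  {p | ∃ e f : Finset (Fin n), p = s(e, f) ∧ e.card = 2 ∧ f.card = 2 ∧ Disjoint e f}

/-- The `ZMod 2`-vector space `V` of functions `P → ZMod 2`. -/
abbrev ATV (n : ℕ) := ↥(ATP n) → ZMod 2

/-- The vector `w₍e,v₎ ∈ V`: its coordinate at a pair `{e, f} ∈ P` is `1` exactly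
when `v ∈ f`, and its coordinates at pairs not containing `e` are `0`. -/
noncomputable def atw (n : ℕ) (e : Finset (Fin n)) (v : Fin n) : ATV n := fun p =>
  if ∃ f : Finset (Fin n), (p : Sym2 (Finset (Fin n))) = s(e, f) ∧ v ∈ f then 1 else 0

/-- The `ZMod 2`-span `W` of the vectors `w₍e,v₎` over all edges `e` and
vertices `v ∉ e`. -/
noncomputable def ATW (n : ℕ) : Submodule (ZMod 2) (ATV n) :=
  Submodule.span (ZMod 2)
    {y | ∃ (e : Finset (Fin n)) (v : Fin n), e.card = 2 ∧ v ∉ e ∧ y = atw n e v}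

/-- `x` has the `K₅`-property: for every 5-element `S ⊆ Fin n`, the sum of `x` over
all pairs `{e, f} ∈ P` with `e ⊆ S` and `f ⊆ S` is `0`. -/
def HasK5 (n : ℕ) (x : ATV n) : Prop :=
  ∀ S : Finset (Fin n), S.card = 5 →
    ∑ p : ATP n,
      (if ∀ e ∈ (p : Sym2 (Finset (Fin n))), e ⊆ S then x p else 0) = 0

/-- `x` has the `2K₃`-property: for every pair of disjoint 3-element subsets
`T₁, T₂` of `Fin n`, the sum of `x` over all pairs `{e, f} ∈ P` with `e ⊆ T₁` and
`f ⊆ T₂` is `0`. -/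
def Has2K3 (n : ℕ) (x : ATV n) : Prop :=
  ∀ T₁ T₂ : Finset (Fin n), T₁.card = 3 → T₂.card = 3 → Disjoint T₁ T₂ →
    ∑ p : ATP n,
      (if ∃ e f : Finset (Fin n),
          (p : Sym2 (Finset (Fin n))) = s(e, f) ∧ e ⊆ T₁ ∧ f ⊆ T₂
        then x p else 0) = 0

lemma mem_ATP_of {n : ℕ} {e f : Finset (Fin n)} (he : e.card = 2) (hf : f.card = 2)
    (hd : Disjoint e f) : s(e, f) ∈ ATP n := ⟨e, f, rfl, he, hf, hd⟩

lemma ATP_elim {n : ℕ} {e f : Finset (Fin n)} (h : s(e, f) ∈ ATP n) :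
    e.card = 2 ∧ f.card = 2 ∧ Disjoint e f := by
  obtain ⟨e', f', heq, he', hf', hd'⟩ := h
  rw [Sym2.eq_iff] at heq
  rcases heq with ⟨rfl, rfl⟩ | ⟨rfl, rfl⟩
  · exact ⟨he', hf', hd'⟩
  · exact ⟨hf', he', hd'.symm⟩

lemma pair_subset_triple {α : Type*} [DecidableEq α] {a b c : α} {e : Finset α}
    (hab : a ≠ b) (hac : a ≠ c) (hbc : b ≠ c)
    (hsub : e ⊆ {a, b, c}) (hcard : e.card = 2) :
    e = {a, b} ∨ e = {a, c} ∨ e = {b, c} := by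
  obtain ⟨u, v, huv, rfl⟩ := Finset.card_eq_two.mp hcard
  have hu := hsub (Finset.mem_insert_self u {v})
  have hv := hsub (Finset.mem_insert_of_mem (Finset.mem_singleton_self v))
  simp only [Finset.mem_insert, Finset.mem_singleton] at hu hv
  rcases hu with rfl | rfl | rfl <;> rcases hv with rfl | rfl | rfl <;>
    first
      | exact absurd rfl huv
      | tauto
      | exact Or.inl (Finset.pair_comm _ _)
      | exact Or.inr (Or.inl (Finset.pair_comm _ _))
      | exact Or.inr (Or.inr (Finset.pair_comm _ _))

noncomputable def chi (n : ℕ) (x : ATV n) (e0 : Finset (Fin n)) (u w : Fin n) : ZMod 2 :=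
  if h : s(e0, ({u, w} : Finset (Fin n))) ∈ ATP n then x ⟨_, h⟩ else 0

lemma chi_comm (n : ℕ) (x : ATV n) (e0 : Finset (Fin n)) (u w : Fin n) :
    chi n x e0 u w = chi n x e0 w u := by
  unfold chi
  rw [Finset.pair_comm]

lemma key (n : ℕ) (x : ATV n) (h2K3 : Has2K3 n x)
    (v0 v1 : Fin n) (hv0 : (v0 : ℕ) = 0) (hv1 : (v1 : ℕ) = 1)
    (h0 : ∀ p : ATP n, (∃ e ∈ (p : Sym2 (Finset (Fin n))), v0 ∈ e) → x p = 0)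
    (i : Fin n) (hi : 2 ≤ (i : ℕ))
    (a b c : Fin n) (hab : a ≠ b) (hac : a ≠ c) (hbc : b ≠ c)
    (ha : 2 ≤ (a : ℕ)) (hb : 2 ≤ (b : ℕ)) (hc : 2 ≤ (c : ℕ))
    (hai : a ≠ i) (hbi : b ≠ i) (hci : c ≠ i) :
    chi n x {v1, i} a b + chi n x {v1, i} a c + chi n x {v1, i} b c = 0 := by
  have hne : ∀ u w : Fin n, (u : ℕ) ≠ (w : ℕ) → u ≠ w := by
    intro u w h hc; exact h (by rw [hc])
  have hv01 : v0 ≠ v1 := hne _ _ (by omega)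
  have hv0i : v0 ≠ i := hne _ _ (by omega)
  have hv1i : v1 ≠ i := hne _ _ (by omega)
  have hv0a : v0 ≠ a := hne _ _ (by omega)
  have hv0b : v0 ≠ b := hne _ _ (by omega)
  have hv0c : v0 ≠ c := hne _ _ (by omega)
  have hv1a : v1 ≠ a := hne _ _ (by omega)
  have hv1b : v1 ≠ b := hne _ _ (by omega)
  have hv1c : v1 ≠ c := hne _ _ (by omega)
  set e0 : Finset (Fin n) := {v1, i} with he0
  have he0card : e0.card = 2 := Finset.card_pair hv1i
  have hmem_e0 : ∀ z : Fin n, z ∈ e0 ↔ z = v1 ∨ z = i := by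
    intro z; simp [he0]
  -- edges of T₂
  have hdisj : ∀ u w : Fin n, u ≠ v1 → u ≠ i → w ≠ v1 → w ≠ i →
      Disjoint e0 ({u, w} : Finset (Fin n)) := by
    intro u w h1 h2 h3 h4
    rw [Finset.disjoint_left]
    intro z hz hz'
    rw [hmem_e0] at hz
    simp only [Finset.mem_insert, Finset.mem_singleton] at hz'
    rcases hz with rfl | rfl <;> rcases hz' with rfl | rfl <;> simp_all
  have hcard2 : ∀ u w : Fin n, u ≠ w → ({u, w} : Finset (Fin n)).card = 2 :=
    fun u w h => Finset.card_pair h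
  have m1 : s(e0, ({a, b} : Finset (Fin n))) ∈ ATP n :=
    mem_ATP_of he0card (hcard2 _ _ hab) (hdisj _ _ hv1a.symm hai hv1b.symm hbi)
  have m2 : s(e0, ({a, c} : Finset (Fin n))) ∈ ATP n :=
    mem_ATP_of he0card (hcard2 _ _ hac) (hdisj _ _ hv1a.symm hai hv1c.symm hci)
  have m3 : s(e0, ({b, c} : Finset (Fin n))) ∈ ATP n :=
    mem_ATP_of he0card (hcard2 _ _ hbc) (hdisj _ _ hv1b.symm hbi hv1c.symm hci)
  set q1 : ATP n := ⟨_, m1⟩ with hq1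
  set q2 : ATP n := ⟨_, m2⟩ with hq2
  set q3 : ATP n := ⟨_, m3⟩ with hq3
  set T₁ : Finset (Fin n) := {v0, v1, i} with hT1
  set T₂ : Finset (Fin n) := {a, b, c} with hT2
  have hT1card : T₁.card = 3 := Finset.card_eq_three.mpr ⟨v0, v1, i, hv01, hv0i, hv1i, rfl⟩
  have hT2card : T₂.card = 3 := Finset.card_eq_three.mpr ⟨a, b, c, hab, hac, hbc, rfl⟩
  have hTdisj : Disjoint T₁ T₂ := by
    rw [Finset.disjoint_left]
    intro z hz hz'
    simp only [hT1, hT2, Finset.mem_insert, Finset.mem_singleton] at hz hz'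
    rcases hz with rfl | rfl | rfl <;> rcases hz' with rfl | rfl | rfl <;> simp_all
  have hS := h2K3 T₁ T₂ hT1card hT2card hTdisj
  have he0T1 : e0 ⊆ T₁ := by
    intro z hz; rw [hmem_e0] at hz
    simp only [hT1, Finset.mem_insert, Finset.mem_singleton]; tauto
  -- rewrite the summand
  have hstep : ∀ p : ATP n,
      (if ∃ e f : Finset (Fin n),
          (p : Sym2 (Finset (Fin n))) = s(e, f) ∧ e ⊆ T₁ ∧ f ⊆ T₂
        then x p else 0) =
      (if p = q1 ∨ p = q2 ∨ p = q3 then x p else 0) := by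
    rintro ⟨q, hq⟩
    by_cases hcnd : ∃ e f : Finset (Fin n), q = s(e, f) ∧ e ⊆ T₁ ∧ f ⊆ T₂
    · obtain ⟨e, f, heq, heT, hfT⟩ := hcnd
      have hq' : s(e, f) ∈ ATP n := heq ▸ hq
      obtain ⟨hecard, hfcard, hef⟩ := ATP_elim hq'
      have hecase := pair_subset_triple hv01 hv0i hv1i heT hecard
      have hfcase := pair_subset_triple hab hac hbc hfT hfcard
      rcases hecase with he | he | he
      · -- v0 ∈ e, so x p = 0
        have hx0 : x ⟨q, hq⟩ = 0 := by
          apply h0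
          have hmem : e ∈ q := by rw [heq]; exact Sym2.mem_mk_left _ _
          exact ⟨e, hmem, by rw [he]; simp⟩
        split_ifs <;> simp [hx0]
      · have hx0 : x ⟨q, hq⟩ = 0 := by
          apply h0
          have hmem : e ∈ q := by rw [heq]; exact Sym2.mem_mk_left _ _
          exact ⟨e, hmem, by rw [he]; simp⟩
        split_ifs <;> simp [hx0]
      · -- e = e0
        have hpq : (⟨q, hq⟩ : ATP n) = q1 ∨ (⟨q, hq⟩ : ATP n) = q2 ∨
            (⟨q, hq⟩ : ATP n) = q3 := by
          rcases hfcase with hf | hf | hf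
          · left; apply Subtype.ext; simp only [hq1]; rw [heq, he, hf]
          · right; left; apply Subtype.ext; simp only [hq2]; rw [heq, he, hf]
          · right; right; apply Subtype.ext; simp only [hq3]; rw [heq, he, hf]
        rw [if_pos ⟨e, f, heq, heT, hfT⟩, if_pos hpq]
    · have hnot : ¬((⟨q, hq⟩ : ATP n) = q1 ∨ (⟨q, hq⟩ : ATP n) = q2 ∨
          (⟨q, hq⟩ : ATP n) = q3) := by
        rintro (h | h | h) <;>
        · apply hcnd
          rw [Subtype.ext_iff] at h
          refine ⟨e0, _, h, he0T1, ?_⟩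
          simp only [hT2]
          intro z hz
          simp only [Finset.mem_insert, Finset.mem_singleton] at hz ⊢
          tauto
      rw [if_neg hcnd, if_neg hnot]
  rw [Finset.sum_congr rfl (fun p _ => hstep p)] at hS
  -- distinctness of q1 q2 q3
  have hfne1 : ({a, b} : Finset (Fin n)) ≠ {a, c} := by
    intro h
    have : b ∈ ({a, c} : Finset (Fin n)) := h ▸ (by simp)
    simp only [Finset.mem_insert, Finset.mem_singleton] at this
    rcases this with rfl | rfl <;> simp_all
  have hfne2 : ({a, b} : Finset (Fin n)) ≠ {b, c} := by
    intro h
    have : a ∈ ({b, c} : Finset (Fin n)) := h ▸ (by simp)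
    simp only [Finset.mem_insert, Finset.mem_singleton] at this
    rcases this with rfl | rfl <;> simp_all
  have hfne3 : ({a, c} : Finset (Fin n)) ≠ {b, c} := by
    intro h
    have : a ∈ ({b, c} : Finset (Fin n)) := h ▸ (by simp)
    simp only [Finset.mem_insert, Finset.mem_singleton] at this
    rcases this with rfl | rfl <;> simp_all
  have he0ne : ∀ u w : Fin n, u ≠ v1 → u ≠ i → e0 ≠ {u, w} := by
    intro u w h1 h2 h
    have : u ∈ e0 := h ▸ (by simp)
    rw [hmem_e0] at this; tauto
  have hq12 : q1 ≠ q2 := by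
    intro h; rw [Subtype.ext_iff] at h
    rw [Sym2.eq_iff] at h
    rcases h with ⟨-, h⟩ | ⟨h, -⟩
    · exact hfne1 h
    · exact he0ne a c hv1a.symm hai h
  have hq13 : q1 ≠ q3 := by
    intro h; rw [Subtype.ext_iff] at h
    rw [Sym2.eq_iff] at h
    rcases h with ⟨-, h⟩ | ⟨h, -⟩
    · exact hfne2 h
    · exact he0ne b c hv1b.symm hbi h
  have hq23 : q2 ≠ q3 := by
    intro h; rw [Subtype.ext_iff] at h
    rw [Sym2.eq_iff] at h
    rcases h with ⟨-, h⟩ | ⟨h, -⟩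
    · exact hfne3 h
    · exact he0ne b c hv1b.symm hbi h
  have hsum : ∑ p : ATP n, (if p = q1 ∨ p = q2 ∨ p = q3 then x p else 0) =
      x q1 + x q2 + x q3 := by
    have : ∀ p : ATP n, (p = q1 ∨ p = q2 ∨ p = q3) ↔
        p ∈ ({q1, q2, q3} : Finset (ATP n)) := by
      intro p; simp
    rw [Finset.sum_congr rfl (fun p _ => by rw [if_congr (this p) rfl rfl])]
    rw [Finset.sum_ite_mem, Finset.univ_inter]
    rw [Finset.sum_insert (by simp [hq12, hq13]),
      Finset.sum_insert (by simp [hq23]), Finset.sum_singleton]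
    ring
  rw [hsum] at hS
  have hch1 : chi n x e0 a b = x q1 := by rw [chi, dif_pos m1]
  have hch2 : chi n x e0 a c = x q2 := by rw [chi, dif_pos m2]
  have hch3 : chi n x e0 b c = x q3 := by rw [chi, dif_pos m3]
  rw [hch1, hch2, hch3]
  exact hS

/-- If `x` has the `K₅`- and `2K₃`-properties and vanishes on all pairs containing
an edge through vertex `0`, then for every `i` with `2 ≤ i ≤ n-1` the set `Eᵢ` of
edges `f` with `x({{1,i}, f}) = 1` has all endpoints in `{2,…,n-1} \ {i}` and forms
a complete bipartite graph on that vertex set (possibly empty). -/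
theorem stmt7 (n : ℕ) (hn : 3 ≤ n) (x : ATV n)
    (hK5 : HasK5 n x) (h2K3 : Has2K3 n x)
    (h0 : ∀ p : ATP n,
      (∃ e ∈ (p : Sym2 (Finset (Fin n))), (⟨0, by omega⟩ : Fin n) ∈ e) → x p = 0)
    (i : Fin n) (hi : 2 ≤ (i : ℕ)) :
    (∀ f : Finset (Fin n),
      ∀ hp : s(({⟨1, by omega⟩, i} : Finset (Fin n)), f) ∈ ATP n,
        x ⟨s(({⟨1, by omega⟩, i} : Finset (Fin n)), f), hp⟩ = 1 →
          f ⊆ (Finset.univ.filter fun v : Fin n => 2 ≤ (v : ℕ)).erase i) ∧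
    ∃ A ⊆ (Finset.univ.filter fun v : Fin n => 2 ≤ (v : ℕ)).erase i,
      ∀ u w : Fin n,
        u ∈ (Finset.univ.filter fun v : Fin n => 2 ≤ (v : ℕ)).erase i →
        w ∈ (Finset.univ.filter fun v : Fin n => 2 ≤ (v : ℕ)).erase i → u ≠ w →
        ((∃ hp : s(({⟨1, by omega⟩, i} : Finset (Fin n)),
              ({u, w} : Finset (Fin n))) ∈ ATP n,
            x ⟨s(({⟨1, by omega⟩, i} : Finset (Fin n)),
              ({u, w} : Finset (Fin n))), hp⟩ = 1) ↔
          ((u ∈ A) ↔ w ∉ A)) := by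
  have hnn : 0 < n := by omega
  set v0 : Fin n := ⟨0, by omega⟩ with hv0def
  set v1 : Fin n := ⟨1, by omega⟩ with hv1def
  set e0 : Finset (Fin n) := {v1, i} with he0def
  set U : Finset (Fin n) := (Finset.univ.filter fun v : Fin n => 2 ≤ (v : ℕ)).erase i
    with hUdef
  have hv0 : (v0 : ℕ) = 0 := rfl
  have hv1 : (v1 : ℕ) = 1 := rfl
  have hmemU : ∀ z : Fin n, z ∈ U ↔ z ≠ i ∧ 2 ≤ (z : ℕ) := by
    intro z; simp [hUdef]
  have hneval : ∀ u w : Fin n, (u : ℕ) ≠ (w : ℕ) → u ≠ w := by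
    intro u w h hc; exact h (by rw [hc])
  have hv1i : v1 ≠ i := hneval _ _ (by omega)
  have he0card : e0.card = 2 := Finset.card_pair hv1i
  have hUe0 : ∀ z : Fin n, z ∈ U → z ∉ e0 := by
    intro z hz
    rw [hmemU] at hz
    simp only [he0def, Finset.mem_insert, Finset.mem_singleton]
    push_neg
    exact ⟨hneval _ _ (by omega), hz.1⟩
  have hdisjU : ∀ u w : Fin n, u ∈ U → w ∈ U →
      Disjoint e0 ({u, w} : Finset (Fin n)) := by
    intro u w hu hw
    rw [Finset.disjoint_right]
    intro z hz
    simp only [Finset.mem_insert, Finset.mem_singleton] at hz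
    rcases hz with rfl | rfl
    · exact hUe0 _ hu
    · exact hUe0 _ hw
  have hmemATP : ∀ u w : Fin n, u ∈ U → w ∈ U → u ≠ w →
      s(e0, ({u, w} : Finset (Fin n))) ∈ ATP n := by
    intro u w hu hw huw
    exact mem_ATP_of he0card (Finset.card_pair huw) (hdisjU u w hu hw)
  have hiff : ∀ u w : Fin n, u ∈ U → w ∈ U → u ≠ w →
      ((∃ hp : s(e0, ({u, w} : Finset (Fin n))) ∈ ATP n,
          x ⟨s(e0, ({u, w} : Finset (Fin n))), hp⟩ = 1) ↔
        chi n x e0 u w = 1) := by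
    intro u w hu hw huw
    have m := hmemATP u w hu hw huw
    constructor
    · rintro ⟨hp, h⟩; rw [chi, dif_pos m]; exact h
    · intro h; exact ⟨m, by rw [chi, dif_pos m] at h; exact h⟩
  have hkey : ∀ a b c : Fin n, a ∈ U → b ∈ U → c ∈ U →
      a ≠ b → a ≠ c → b ≠ c →
      chi n x e0 a b + chi n x e0 a c + chi n x e0 b c = 0 := by
    intro a b c haU hbU hcU hab hac hbc
    rw [hmemU] at haU hbU hcU
    exact key n x h2K3 v0 v1 hv0 hv1 h0 i hi a b c hab hac hbc
      haU.2 hbU.2 hcU.2 haU.1 hbU.1 hcU.1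
  constructor
  · -- part 1
    intro f hp hx1 z hz
    obtain ⟨-, hf2, hdisj⟩ := ATP_elim hp
    have hznot : z ∉ e0 := Finset.disjoint_right.mp hdisj hz
    have hz0 : z ≠ v0 := by
      rintro rfl
      have h := h0 ⟨_, hp⟩ ⟨f, Sym2.mem_mk_right _ _, hz⟩
      rw [h] at hx1
      exact absurd hx1 (by decide)
    rw [hmemU]
    constructor
    · rintro rfl; exact hznot (by simp [he0def])
    · simp only [he0def, Finset.mem_insert, Finset.mem_singleton] at hznot
      push_neg at hznot
      have h1 : (z : ℕ) ≠ 1 := fun h => hznot.1 (Fin.ext (by rw [hv1]; exact h))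
      have h00 : (z : ℕ) ≠ 0 := fun h => hz0 (Fin.ext (by rw [hv0]; exact h))
      omega
  · -- part 2
    rcases U.eq_empty_or_nonempty with hU0 | ⟨u₀, hu₀⟩
    · refine ⟨∅, Finset.empty_subset _, fun u w hu hw huw => ?_⟩
      rw [hU0] at hu
      simp at hu
    · set A : Finset (Fin n) :=
        U.filter (fun w => w ≠ u₀ ∧ chi n x e0 u₀ w = 1) with hAdef
      have hAsub : A ⊆ U := Finset.filter_subset _ _
      have hAmem : ∀ z : Fin n, z ∈ U → z ≠ u₀ →
          (z ∈ A ↔ chi n x e0 u₀ z = 1) := by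
        intro z hzU hz
        simp [hAdef, Finset.mem_filter, hzU, hz]
      have hAu₀ : u₀ ∉ A := by simp [hAdef, Finset.mem_filter]
      refine ⟨A, hAsub, fun u w huU hwU huw => ?_⟩
      rw [hiff u w huU hwU huw]
      have h2 : ∀ z : ZMod 2, z = 0 ∨ z = 1 := by decide
      rcases eq_or_ne u u₀ with rfl | hu1
      · -- u = u₀
        rw [hAmem w hwU (Ne.symm huw)]
        simp only [hAu₀, false_iff, not_not]
      · rcases eq_or_ne w u₀ with rfl | hw1
        · rw [chi_comm n x e0 u w, hAmem u huU hu1]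
          simp [hAu₀]
        · have hk := hkey u₀ u w hu₀ huU hwU (Ne.symm hu1) (Ne.symm hw1) huw
          rw [hAmem u huU hu1, hAmem w hwU hw1]
          rcases h2 (chi n x e0 u₀ u) with h1 | h1 <;>
            rcases h2 (chi n x e0 u₀ w) with h2' | h2' <;>
            rcases h2 (chi n x e0 u w) with h3 | h3 <;>
            rw [h1, h2', h3] at hk ⊢ <;> revert hk <;> decide
end

section
/- For every natural number n, every edge e of Kₙ and every vertex v ∉ e, the vector w₍e,v₎ has both the K₅-property and the 2K₃-property. Consequently, every vector in the span W has both properties. -/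
open scoped Classical

lemma key_s8 (n : ℕ) (e : Finset (Fin n)) (v : Fin n) (he : e.card = 2)
    (C : Sym2 (Finset (Fin n)) → Prop) (F : Finset (Finset (Fin n)))
    (hF : ∀ f : Finset (Fin n), f ∈ F ↔ f.card = 2 ∧ Disjoint e f ∧ v ∈ f ∧ C (s(e, f))) :
    ∑ p : ATP n, (if C p then atw n e v p else 0) = (F.card : ZMod 2) := by
  have h1 : ∀ p : ATP n, (if C p then atw n e v p else 0)
      = if (∃ f : Finset (Fin n), (p : Sym2 (Finset (Fin n))) = s(e, f) ∧ v ∈ f) ∧ C p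
        then (1 : ZMod 2) else 0 := by
    intro p
    unfold atw
    by_cases h : C (p : Sym2 (Finset (Fin n))) <;>
      by_cases h2 : ∃ f : Finset (Fin n), (p : Sym2 (Finset (Fin n))) = s(e, f) ∧ v ∈ f <;>
      simp [h, h2]
  simp only [h1]
  rw [Finset.sum_boole]
  congr 1
  refine (Finset.card_bij (fun f hf => (⟨s(e, f), ?_⟩ : ATP n)) ?_ ?_ ?_).symm
  · rw [hF] at hf
    exact ⟨e, f, rfl, he, hf.1, hf.2.1⟩
  · intro f hf
    rw [hF] at hf
    simp only [Finset.mem_filter]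
    exact ⟨Finset.mem_univ _, ⟨f, rfl, hf.2.2.1⟩, hf.2.2.2⟩
  · intro f₁ hf₁ f₂ hf₂ hEq
    rw [hF] at hf₁ hf₂
    have hss : s(e, f₁) = s(e, f₂) := congrArg Subtype.val hEq
    rcases Sym2.eq_iff.1 hss with ⟨-, h⟩ | ⟨h1', h2'⟩
    · exact h
    · exfalso
      have hde := hf₁.2.1
      rw [h2'] at hde
      have : e = ∅ := by simpa using disjoint_self.1 hde
      rw [this] at he; simp at he
  · rintro ⟨p, hp⟩ hb
    simp only [Finset.mem_filter] at hb
    obtain ⟨-, ⟨f, hpf, hvf⟩, hC⟩ := hb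
    obtain ⟨a, b, hab, ha2, hb2, hd⟩ := hp
    have hpf' : s(a, b) = s(e, f) := by rw [← hab, hpf]
    have hf2 : f.card = 2 ∧ Disjoint e f := by
      rcases Sym2.eq_iff.1 hpf' with ⟨h1', h2'⟩ | ⟨h1', h2'⟩
      · constructor
        · rw [← h2']; exact hb2
        · rw [← h1', ← h2']; exact hd
      · constructor
        · rw [← h1']; exact ha2
        · rw [← h2', ← h1']; exact hd.symm
    exact ⟨f, (hF f).2 ⟨hf2.1, hf2.2, hvf, hpf ▸ hC⟩, Subtype.ext hpf.symm⟩

lemma countA (n : ℕ) (e : Finset (Fin n)) (v : Fin n) (A : Finset (Fin n))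
    (hv : v ∉ e) (hvA : v ∈ A) (f : Finset (Fin n)) :
    f ∈ (A \ insert v e).image (fun u => {v, u})
      ↔ f.card = 2 ∧ Disjoint e f ∧ v ∈ f ∧ f ⊆ A := by
  simp only [Finset.mem_image, Finset.mem_sdiff, Finset.mem_insert]
  constructor
  · rintro ⟨u, ⟨huA, hu⟩, rfl⟩
    push_neg at hu
    refine ⟨?_, ?_, by simp, ?_⟩
    · rw [Finset.card_insert_of_notMem (Finset.notMem_singleton.2 (Ne.symm hu.1)),
        Finset.card_singleton]
    · rw [Finset.disjoint_right]
      intro x hx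
      rcases Finset.mem_insert.1 hx with rfl | hx
      · exact hv
      · rw [Finset.mem_singleton] at hx; exact hx ▸ hu.2
    · exact Finset.insert_subset hvA (Finset.singleton_subset_iff.2 huA)
  · rintro ⟨hc2, hd, hvf, hfA⟩
    obtain ⟨a, b, hab, hfab⟩ := Finset.card_eq_two.1 hc2
    have : v = a ∨ v = b := by
      have := hvf; rw [hfab] at this; simpa using this
    rcases this with rfl | rfl
    · refine ⟨b, ⟨hfA (by simp [hfab]), ?_⟩, hfab.symm⟩
      push_neg
      exact ⟨fun h => hab h.symm, fun hb => (Finset.disjoint_right.1 hd (by simp [hfab])) hb⟩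
    · refine ⟨a, ⟨hfA (by simp [hfab]), ?_⟩, ?_⟩
      · push_neg
        exact ⟨hab, fun ha => (Finset.disjoint_right.1 hd (by simp [hfab])) ha⟩
      · rw [hfab]; exact (Finset.pair_comm v a)

lemma countA_card (n : ℕ) (e : Finset (Fin n)) (v : Fin n) (A : Finset (Fin n)) :
    ((A \ insert v e).image (fun u => ({v, u} : Finset (Fin n)))).card = (A \ insert v e).card := by
  apply Finset.card_image_of_injOn
  intro u₁ h₁ u₂ h₂ hEq
  simp only [Finset.coe_sdiff, Finset.coe_insert, Set.mem_diff, Set.mem_insert_iff,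
    Finset.mem_coe] at h₁ h₂
  push_neg at h₁ h₂
  have : u₁ ∈ ({v, u₂} : Finset (Fin n)) := by
    have h' : ({v, u₁} : Finset (Fin n)) = {v, u₂} := hEq
    rw [← h']; simp
  rcases Finset.mem_insert.1 this with rfl | h
  · exact absurd rfl h₁.2.1
  · exact Finset.mem_singleton.1 h

lemma ite_irrel {α : Sort*} {p : Prop} {inst1 inst2 : Decidable p} (a b : α) :
    @ite _ p inst1 a b = @ite _ p inst2 a b := by
  cases Subsingleton.elim inst1 inst2; rfl

lemma two_eq_zero : ((2 : ℕ) : ZMod 2) = 0 := by decide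

lemma gen_K5 (n : ℕ) (e : Finset (Fin n)) (v : Fin n) (he : e.card = 2) (hv : v ∉ e)
    (S : Finset (Fin n)) (hS : S.card = 5) :
    ∑ p : ATP n,
      (if ∀ e' ∈ (p : Sym2 (Finset (Fin n))), e' ⊆ S then atw n e v p else 0) = 0 := by
  by_cases hes : e ⊆ S ∧ v ∈ S
  · refine Eq.trans ?_ ((key_s8 n e v he (fun q => ∀ e' ∈ q, e' ⊆ S)
      ((S \ insert v e).image (fun u => {v, u})) ?_).trans ?_)
    · exact Finset.sum_congr rfl fun p _ => ite_irrel _ _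
    · intro f
      rw [countA n e v S hv hes.2 f]
      simp only [Sym2.mem_iff]
      constructor
      · rintro ⟨a1, a2, a3, a4⟩
        refine ⟨a1, a2, a3, ?_⟩
        rintro e' (rfl | rfl)
        · exact hes.1
        · exact a4
      · rintro ⟨a1, a2, a3, a4⟩
        exact ⟨a1, a2, a3, a4 f (Or.inr rfl)⟩
    · rw [countA_card, Finset.card_sdiff_of_subset (Finset.insert_subset hes.2 hes.1),
        Finset.card_insert_of_notMem hv, he, hS]
      exact two_eq_zero
  · refine Eq.trans ?_ ((key_s8 n e v he (fun q => ∀ e' ∈ q, e' ⊆ S) ∅ ?_).trans ?_)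
    · exact Finset.sum_congr rfl fun p _ => ite_irrel _ _
    · intro f
      simp only [Finset.notMem_empty, false_iff]
      rintro ⟨a1, a2, a3, a4⟩
      simp only [Sym2.mem_iff] at a4
      exact hes ⟨a4 e (Or.inl rfl), a4 f (Or.inr rfl) a3⟩
    · simp

lemma gen_2K3 (n : ℕ) (e : Finset (Fin n)) (v : Fin n) (he : e.card = 2) (hv : v ∉ e)
    (T₁ T₂ : Finset (Fin n)) (h1 : T₁.card = 3) (h2 : T₂.card = 3) (hd : Disjoint T₁ T₂) :
    ∑ p : ATP n,
      (if ∃ e' f' : Finset (Fin n),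
          (p : Sym2 (Finset (Fin n))) = s(e', f') ∧ e' ⊆ T₁ ∧ f' ⊆ T₂
        then atw n e v p else 0) = 0 := by
  set C : Sym2 (Finset (Fin n)) → Prop :=
    fun q => ∃ e' f' : Finset (Fin n), q = s(e', f') ∧ e' ⊆ T₁ ∧ f' ⊆ T₂ with hCdef
  have hC : ∀ f : Finset (Fin n),
      C (s(e, f)) ↔ (e ⊆ T₁ ∧ f ⊆ T₂) ∨ (f ⊆ T₁ ∧ e ⊆ T₂) := by
    intro f
    constructor
    · rintro ⟨e', f', hq, he', hf'⟩
      rcases Sym2.eq_iff.1 hq with ⟨rfl, rfl⟩ | ⟨rfl, rfl⟩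
      · exact Or.inl ⟨he', hf'⟩
      · exact Or.inr ⟨he', hf'⟩
    · rintro (⟨ha, hb⟩ | ⟨ha, hb⟩)
      · exact ⟨e, f, rfl, ha, hb⟩
      · exact ⟨f, e, Sym2.eq_swap, ha, hb⟩
  have hboth : ¬(e ⊆ T₁ ∧ e ⊆ T₂) := by
    rintro ⟨ha, hb⟩
    have : e = ∅ := Finset.subset_empty.1 (by
      intro x hx
      exact absurd (hb hx) (Finset.disjoint_left.1 hd (ha hx)))
    rw [this] at he; simp at he
  have hd21 : ∀ x ∈ e, ∀ {TT : Finset (Fin n)}, e ⊆ TT → True := fun _ _ _ _ => trivial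
  by_cases he1 : e ⊆ T₁
  · have he2 : ¬ e ⊆ T₂ := fun h => hboth ⟨he1, h⟩
    by_cases hvT : v ∈ T₂
    · refine Eq.trans ?_ ((key_s8 n e v he C
        ((T₂ \ insert v e).image (fun u => {v, u})) ?_).trans ?_)
      · exact Finset.sum_congr rfl fun p _ => ite_irrel _ _
      · intro f
        rw [countA n e v T₂ hv hvT f, hC f]
        constructor
        · rintro ⟨a1, a2, a3, a4⟩
          exact ⟨a1, a2, a3, Or.inl ⟨he1, a4⟩⟩
        · rintro ⟨a1, a2, a3, (⟨b1, b2⟩ | ⟨b1, b2⟩)⟩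
          · exact ⟨a1, a2, a3, b2⟩
          · exact absurd b2 he2
      · rw [countA_card]
        have hsd : T₂ \ insert v e = T₂.erase v := by
          ext x
          simp only [Finset.mem_sdiff, Finset.mem_insert, Finset.mem_erase]
          constructor
          · rintro ⟨hx, h⟩; push_neg at h; exact ⟨h.1, hx⟩
          · rintro ⟨hx1, hx2⟩
            refine ⟨hx2, ?_⟩
            push_neg
            exact ⟨hx1, fun hxe => Finset.disjoint_left.1 hd (he1 hxe) hx2⟩
        rw [hsd, Finset.card_erase_of_mem hvT, h2]
        exact two_eq_zero
    · refine Eq.trans ?_ ((key_s8 n e v he C ∅ ?_).trans ?_)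
      · exact Finset.sum_congr rfl fun p _ => ite_irrel _ _
      · intro f
        simp only [Finset.notMem_empty, false_iff]
        rintro ⟨a1, a2, a3, a4⟩
        rcases (hC f).1 a4 with ⟨b1, b2⟩ | ⟨b1, b2⟩
        · exact hvT (b2 a3)
        · exact he2 b2
      · simp
  · by_cases he2 : e ⊆ T₂
    · by_cases hvT : v ∈ T₁
      · refine Eq.trans ?_ ((key_s8 n e v he C
          ((T₁ \ insert v e).image (fun u => {v, u})) ?_).trans ?_)
        · exact Finset.sum_congr rfl fun p _ => ite_irrel _ _
        · intro f
          rw [countA n e v T₁ hv hvT f, hC f]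
          constructor
          · rintro ⟨a1, a2, a3, a4⟩
            exact ⟨a1, a2, a3, Or.inr ⟨a4, he2⟩⟩
          · rintro ⟨a1, a2, a3, (⟨b1, b2⟩ | ⟨b1, b2⟩)⟩
            · exact absurd b1 he1
            · exact ⟨a1, a2, a3, b1⟩
        · rw [countA_card]
          have hsd : T₁ \ insert v e = T₁.erase v := by
            ext x
            simp only [Finset.mem_sdiff, Finset.mem_insert, Finset.mem_erase]
            constructor
            · rintro ⟨hx, h⟩; push_neg at h; exact ⟨h.1, hx⟩
            · rintro ⟨hx1, hx2⟩
              refine ⟨hx2, ?_⟩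
              push_neg
              exact ⟨hx1, fun hxe => Finset.disjoint_right.1 hd (he2 hxe) hx2⟩
          rw [hsd, Finset.card_erase_of_mem hvT, h1]
          exact two_eq_zero
      · refine Eq.trans ?_ ((key_s8 n e v he C ∅ ?_).trans ?_)
        · exact Finset.sum_congr rfl fun p _ => ite_irrel _ _
        · intro f
          simp only [Finset.notMem_empty, false_iff]
          rintro ⟨a1, a2, a3, a4⟩
          rcases (hC f).1 a4 with ⟨b1, b2⟩ | ⟨b1, b2⟩
          · exact he1 b1
          · exact hvT (b1 a3)
        · simp
    · refine Eq.trans ?_ ((key_s8 n e v he C ∅ ?_).trans ?_)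
      · exact Finset.sum_congr rfl fun p _ => ite_irrel _ _
      · intro f
        simp only [Finset.notMem_empty, false_iff]
        rintro ⟨a1, a2, a3, a4⟩
        rcases (hC f).1 a4 with ⟨b1, b2⟩ | ⟨b1, b2⟩
        · exact he1 b1
        · exact he2 b2
      · simp

lemma sum_if_add {α : Type*} [Fintype α] (P : α → Prop) [DecidablePred P]
    (x y : α → ZMod 2) :
    ∑ p : α, (if P p then (x + y) p else 0)
      = (∑ p : α, if P p then x p else 0) + ∑ p : α, (if P p then y p else 0) := by
  rw [← Finset.sum_add_distrib]
  apply Finset.sum_congr rfl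
  intros p _
  by_cases h : P p <;> simp [h]

lemma sum_if_smul {α : Type*} [Fintype α] (P : α → Prop) [DecidablePred P]
    (a : ZMod 2) (x : α → ZMod 2) :
    ∑ p : α, (if P p then (a • x) p else 0)
      = a * ∑ p : α, (if P p then x p else 0) := by
  rw [Finset.mul_sum]
  apply Finset.sum_congr rfl
  intros p _
  by_cases h : P p <;> simp [h]


/-- Each generator `w₍e,v₎` has both the `K₅`-property and the `2K₃`-property;
consequently every vector in the span `W` has both properties. -/
theorem stmt8 (n : ℕ) :
    (∀ (e : Finset (Fin n)) (v : Fin n), e.card = 2 → v ∉ e →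
      HasK5 n (atw n e v) ∧ Has2K3 n (atw n e v)) ∧
    (∀ x ∈ ATW n, HasK5 n x ∧ Has2K3 n x) := by
  have hgen : ∀ (e : Finset (Fin n)) (v : Fin n), e.card = 2 → v ∉ e →
      HasK5 n (atw n e v) ∧ Has2K3 n (atw n e v) := by
    intro e v he hv
    exact ⟨fun S hS => gen_K5 n e v he hv S hS,
      fun T₁ T₂ h1 h2 hdd => gen_2K3 n e v he hv T₁ T₂ h1 h2 hdd⟩
  refine ⟨hgen, fun x hx => ?_⟩
  refine Submodule.span_induction ?_ ?_ ?_ ?_ hx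
  · rintro y ⟨e, v, he, hv, rfl⟩
    exact hgen e v he hv
  · constructor
    · intro S hS; simp
    · intro T₁ T₂ h1 h2 hdd; simp
  · rintro y z - - ⟨hy5, hy3⟩ ⟨hz5, hz3⟩
    constructor
    · intro S hS
      rw [sum_if_add _ y z, hy5 S hS, hz5 S hS, add_zero]
    · intro T₁ T₂ h1 h2 hdd
      rw [sum_if_add _ y z, hy3 T₁ T₂ h1 h2 hdd, hz3 T₁ T₂ h1 h2 hdd, add_zero]
  · rintro a y - ⟨hy5, hy3⟩
    constructor
    · intro S hS
      rw [sum_if_smul _ a y, hy5 S hS, mul_zero]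
    · intro T₁ T₂ h1 h2 hdd
      rw [sum_if_smul _ a y, hy3 T₁ T₂ h1 h2 hdd, mul_zero]
end
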